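/- arXiv:2111.07842 — 10 statements merged into one kernel-verified Lean document; each statement's English description precedes it below -/
import Mathlib

section
/- The function f : ℝ → ℝ given by f(y) = 5y² + 20/y − 5/(2y⁴) (for y ≠ 0) does not have a local maximum at y = 1 and does not have a local minimum at y = 1. -/
/-!
Clearing denominators, `f y - f 1 = 5 (y - 1)³ (2y³ + 6y² + 3y + 1) / (2y⁴)`, and the last two
factors are positive for `y > 0`. So `f - f 1` has the sign of `(y - 1)³` near `1`: `1` is an
inflection point, with values above `f 1` to its right and below it to its left.
-/

open Filter Set Topology

section

variable {α β : Type*} [TopologicalSpace α] [Preorder β] {f : α → β} {a : α} {l : Filter α}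
  [l.NeBot]

theorem not_isLocalMax_of_eventually_lt (hl : l ≤ 𝓝 a) (h : ∀ᶠ y in l, f a < f y) :
    ¬ IsLocalMax f a := fun hmax =>
  let ⟨_, hle, hlt⟩ := ((hmax.filter_mono hl).and h).exists
  hle.not_gt hlt

theorem not_isLocalMin_of_eventually_lt (hl : l ≤ 𝓝 a) (h : ∀ᶠ y in l, f y < f a) :
    ¬ IsLocalMin f a := fun hmin =>
  let ⟨_, hle, hlt⟩ := ((hmin.filter_mono hl).and h).exists
  hle.not_gt hlt

end

noncomputable def scalE6 (y : ℝ) : ℝ := 5 * y ^ 2 + 20 / y - 5 / (2 * y ^ 4)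

theorem scalE6_one : scalE6 1 = 45 / 2 := by norm_num [scalE6]

theorem scalE6_sub_scalE6_one {y : ℝ} (hy : y ≠ 0) :
    scalE6 y - scalE6 1 = 5 * (y - 1) ^ 3 * (2 * y ^ 3 + 6 * y ^ 2 + 3 * y + 1) / (2 * y ^ 4) := by
  rw [scalE6_one, scalE6]
  field_simp
  ring

theorem scalE6_one_lt {y : ℝ} (hy : 1 < y) : scalE6 1 < scalE6 y := by
  have hy₀ : 0 < y := by linarith
  have hcube : 0 < (y - 1) ^ 3 := pow_pos (sub_pos.mpr hy) 3
  rw [← sub_pos, scalE6_sub_scalE6_one hy₀.ne']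
  positivity

theorem scalE6_lt_one {y : ℝ} (hy₀ : 0 < y) (hy : y < 1) : scalE6 y < scalE6 1 := by
  have hcube : 0 < (1 - y) ^ 3 := pow_pos (sub_pos.mpr hy) 3
  have hdiff : scalE6 1 - scalE6 y
      = 5 * (1 - y) ^ 3 * (2 * y ^ 3 + 6 * y ^ 2 + 3 * y + 1) / (2 * y ^ 4) := by
    rw [← neg_sub, scalE6_sub_scalE6_one hy₀.ne']
    ring
  rw [← sub_pos, hdiff]
  positivity

/-- The function `f(y) = 5y² + 20/y − 5/(2y⁴)` has neither a local maximum nor a local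
minimum at `y = 1`. -/
theorem scal_E6_not_localMax_not_localMin (f : ℝ → ℝ)
    (hf : ∀ y : ℝ, f y = 5 * y ^ 2 + 20 / y - 5 / (2 * y ^ 4)) :
    ¬ IsLocalMax f 1 ∧ ¬ IsLocalMin f 1 := by
  obtain rfl : f = scalE6 := funext hf
  refine ⟨not_isLocalMax_of_eventually_lt (l := 𝓝[>] 1) nhdsWithin_le_nhds ?_,
    not_isLocalMin_of_eventually_lt (l := 𝓝[<] 1) nhdsWithin_le_nhds ?_⟩
  · filter_upwards [self_mem_nhdsWithin] with y hy using scalE6_one_lt hy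
  · filter_upwards [Ioo_mem_nhdsLT zero_lt_one] with y hy using scalE6_lt_one hy.1 hy.2
end

section
/- Let S : ℝ² → ℝ be defined on the open quadrant {x > 0, y > 0} by S(x,y) = 5/x + 20/y − 5x/(2y²), and let V = {(x,y) ∈ ℝ² : x > 0, y > 0, x²⁰y⁴⁰ = 1}. Then S does not have a local maximum on V at the point (1,1); that is, every neighborhood of (1,1) contains a point (x,y) ∈ V with S(x,y) > S(1,1). -/
/-!
Along the curve `s ↦ (s⁻², s)`, which lies in `V` and passes through `(1,1)` at `s = 1`,
the curvature is `5 s² + 20/s − 5/(2 s⁴)`. Its difference with `S(1,1) = 45/2` has a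
*triple* zero at `s = 1`, so it changes sign there: `S` increases along the curve for `s > 1`.
-/

open Filter Topology

namespace ScalE6

noncomputable def scal (p : ℝ × ℝ) : ℝ := 5 / p.1 + 20 / p.2 - 5 * p.1 / (2 * p.2 ^ 2)

noncomputable def unitVolumeCurve (s : ℝ) : ℝ × ℝ := ((s ^ 2)⁻¹, s)

lemma unitVolumeCurve_one : unitVolumeCurve 1 = (1, 1) := by
  simp [unitVolumeCurve]

lemma continuousAt_unitVolumeCurve {s : ℝ} (hs : s ≠ 0) : ContinuousAt unitVolumeCurve s :=
  ((continuous_pow 2).continuousAt.inv₀ (pow_ne_zero 2 hs)).prodMk continuousAt_id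

lemma tendsto_unitVolumeCurve_nhdsGT_one :
    Tendsto unitVolumeCurve (𝓝[>] 1) (𝓝 (1, 1)) :=
  unitVolumeCurve_one ▸ (continuousAt_unitVolumeCurve one_ne_zero).tendsto.mono_left
    nhdsWithin_le_nhds

lemma unitVolumeCurve_volume {s : ℝ} (hs : s ≠ 0) (n : ℕ) :
    (unitVolumeCurve s).1 ^ n * (unitVolumeCurve s).2 ^ (2 * n) = 1 := by
  simp only [unitVolumeCurve, inv_pow, pow_mul]
  exact inv_mul_cancel₀ (pow_ne_zero n (pow_ne_zero 2 hs))

lemma unitVolumeCurve_mem {s : ℝ} (hs : 0 < s) :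
    unitVolumeCurve s ∈ {p : ℝ × ℝ | 0 < p.1 ∧ 0 < p.2 ∧ p.1 ^ 20 * p.2 ^ 40 = 1} :=
  ⟨inv_pos.mpr (pow_pos hs 2), hs, unitVolumeCurve_volume hs.ne' 20⟩

lemma scal_one_one : scal (1, 1) = 45 / 2 := by
  norm_num [scal]

lemma scal_unitVolumeCurve_sub_scal_one_one {s : ℝ} (hs : s ≠ 0) :
    scal (unitVolumeCurve s) - scal (1, 1)
      = 5 * (s - 1) ^ 3 * (2 * s ^ 3 + 6 * s ^ 2 + 3 * s + 1) / (2 * s ^ 4) := by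
  rw [scal_one_one]
  simp only [scal, unitVolumeCurve]
  field_simp
  ring

lemma scal_one_one_lt_scal_unitVolumeCurve {s : ℝ} (hs : 1 < s) :
    scal (1, 1) < scal (unitVolumeCurve s) := by
  have hs₀ : 0 < s := one_pos.trans hs
  have hs₁ : 0 < s - 1 := sub_pos.mpr hs
  rw [← sub_pos, scal_unitVolumeCurve_sub_scal_one_one hs₀.ne']
  positivity

end ScalE6

open ScalE6 in
/-- The scalar curvature `S(x,y) = 5/x + 20/y − 5x/(2y²)` on the unit-volume variety
`V = {x > 0, y > 0, x²⁰y⁴⁰ = 1}` does not have a local maximum at `(1,1)`: every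
neighborhood of `(1,1)` contains a point of `V` where `S` exceeds `S(1,1)`. -/
theorem scal_E6_not_localMaxOn
    (S : ℝ × ℝ → ℝ)
    (hS : ∀ p : ℝ × ℝ, S p = 5 / p.1 + 20 / p.2 - 5 * p.1 / (2 * p.2 ^ 2))
    (V : Set (ℝ × ℝ))
    (hV : V = {p : ℝ × ℝ | 0 < p.1 ∧ 0 < p.2 ∧ p.1 ^ 20 * p.2 ^ 40 = 1}) :
    ∀ U ∈ nhds ((1, 1) : ℝ × ℝ), ∃ p ∈ U, p ∈ V ∧ S (1, 1) < S p := by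
  obtain rfl : S = scal := funext hS
  intro U hU
  have hcurve : ∀ᶠ s in 𝓝[>] (1 : ℝ),
      unitVolumeCurve s ∈ U ∧ unitVolumeCurve s ∈ V ∧ scal (1, 1) < scal (unitVolumeCurve s) := by
    filter_upwards [tendsto_unitVolumeCurve_nhdsGT_one.eventually_mem hU, self_mem_nhdsWithin]
      with s hsU (hs : 1 < s)
    exact ⟨hsU, hV ▸ unitVolumeCurve_mem (one_pos.trans hs), scal_one_one_lt_scal_unitVolumeCurve hs⟩
  obtain ⟨s, hs⟩ := hcurve.exists
  exact ⟨unitVolumeCurve s, hs⟩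
end

section
/- Fix an integer n ≥ 3 and let F : ℝ² → ℝ be defined on {x > 0, y > 0} by F(x,y) = (n² − 3n + 2)/(4x) + (n−1)/y − (n−2)x/(4y²) − (1/4) x^{1−(n−1)²} y^{−2n}. Then the kernel of the Hessian of F at the point (1,1) is one-dimensional, spanned by the vector (−2/(n−2), 1); that is, for v ∈ ℝ², the second Fréchet derivative of F at (1,1) satisfies D²F(1,1)(v,w) = 0 for all w ∈ ℝ² if and only if v is a scalar multiple of (−2/(n−2), 1). -/
/-!
`F` is a sum of four monomials `k x^α y^β` with real exponents, and the Hessian of such a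
monomial at `(1,1)` is `k [[α(α-1), αβ], [αβ, β(β-1)]]`. Adding the four up, the Hessian of `F`
at `(1,1)` has rank one: `D²F(1,1)(v,w) = -(n²-1)/4 · ⟪u,v⟫⟪u,w⟫` with `u = (n-2, 2)`, so its
kernel is the line `u^⊥`, spanned by `(-2/(n-2), 1)`.
-/

open ContinuousLinearMap Filter Topology

theorem fderiv_fderiv_eq_of_eventually_hasFDerivAt {E F : Type*} [NormedAddCommGroup E]
    [NormedSpace ℝ E] [NormedAddCommGroup F] [NormedSpace ℝ F] {f : E → F} {g : E → E →L[ℝ] F}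
    {H : E →L[ℝ] E →L[ℝ] F} {x : E} (hf : ∀ᶠ y in 𝓝 x, HasFDerivAt f (g y) y)
    (hg : HasFDerivAt g H x) : fderiv ℝ (fderiv ℝ f) x = H :=
  (EventuallyEq.fderiv_eq (hf.mono fun _ hy => hy.fderiv)).trans hg.fderiv

noncomputable def rpowMonomial (k α β : ℝ) (p : ℝ × ℝ) : ℝ := k * p.1 ^ α * p.2 ^ β

noncomputable def rpowMonomialGrad (k α β : ℝ) (p : ℝ × ℝ) : ℝ × ℝ →L[ℝ] ℝ :=
  rpowMonomial (k * α) (α - 1) β p • fst ℝ ℝ ℝ + rpowMonomial (k * β) α (β - 1) p • snd ℝ ℝ ℝ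

noncomputable def rpowMonomialHessian (k α β : ℝ) (p : ℝ × ℝ) : ℝ × ℝ →L[ℝ] ℝ × ℝ →L[ℝ] ℝ :=
  (rpowMonomialGrad (k * α) (α - 1) β p).smulRight (fst ℝ ℝ ℝ)
    + (rpowMonomialGrad (k * β) α (β - 1) p).smulRight (snd ℝ ℝ ℝ)

section Monomial

variable (k α β : ℝ) {p : ℝ × ℝ}

theorem hasFDerivAt_rpowMonomial (hp₁ : p.1 ≠ 0) (hp₂ : p.2 ≠ 0) :
    HasFDerivAt (rpowMonomial k α β) (rpowMonomialGrad k α β p) p := by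
  have hx : HasFDerivAt (fun q : ℝ × ℝ => k * q.1 ^ α) ((k * (α * p.1 ^ (α - 1))) • fst ℝ ℝ ℝ) p :=
    ((Real.hasDerivAt_rpow_const (Or.inl hp₁)).const_mul k).comp_hasFDerivAt p hasFDerivAt_fst
  have hy : HasFDerivAt (fun q : ℝ × ℝ => q.2 ^ β) ((β * p.2 ^ (β - 1)) • snd ℝ ℝ ℝ) p :=
    (Real.hasDerivAt_rpow_const (Or.inl hp₂)).comp_hasFDerivAt p hasFDerivAt_snd
  refine (hx.mul hy).congr_fderiv (ContinuousLinearMap.ext fun w => ?_)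
  simp only [rpowMonomialGrad, rpowMonomial, add_apply, smul_apply, coe_fst', coe_snd',
    smul_eq_mul]
  ring

theorem hasFDerivAt_rpowMonomialGrad (hp₁ : p.1 ≠ 0) (hp₂ : p.2 ≠ 0) :
    HasFDerivAt (rpowMonomialGrad k α β) (rpowMonomialHessian k α β p) p :=
  ((hasFDerivAt_rpowMonomial (k * α) (α - 1) β hp₁ hp₂).smul_const (fst ℝ ℝ ℝ)).add
    ((hasFDerivAt_rpowMonomial (k * β) α (β - 1) hp₁ hp₂).smul_const (snd ℝ ℝ ℝ))

theorem rpowMonomialHessian_one_one_apply (v w : ℝ × ℝ) :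
    rpowMonomialHessian k α β (1, 1) v w =
      k * (α * (α - 1) * v.1 * w.1 + α * β * (v.1 * w.2 + v.2 * w.1)
        + β * (β - 1) * v.2 * w.2) := by
  simp only [rpowMonomialHessian, rpowMonomialGrad, rpowMonomial, add_apply, smulRight_apply,
    smul_apply, coe_fst', coe_snd', smul_eq_mul, Real.one_rpow]
  ring

end Monomial

theorem eventually_ne_zero_coords_nhds_one_one :
    ∀ᶠ p : ℝ × ℝ in 𝓝 (1, 1), p.1 ≠ 0 ∧ p.2 ≠ 0 :=
  (continuous_fst.tendsto ((1, 1) : ℝ × ℝ)).eventually_ne one_ne_zero |>.and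
    ((continuous_snd.tendsto ((1, 1) : ℝ × ℝ)).eventually_ne one_ne_zero)

theorem forall_rankOne_eq_zero_iff {k s t : ℝ} (hk : k ≠ 0) (hst : (s, t) ≠ 0) (v : ℝ × ℝ) :
    (∀ w : ℝ × ℝ, k * (s * v.1 + t * v.2) * (s * w.1 + t * w.2) = 0) ↔ s * v.1 + t * v.2 = 0 := by
  refine ⟨fun h => ?_, fun h w => by rw [h, mul_zero, zero_mul]⟩
  have hnorm : s * s + t * t ≠ 0 := by
    contrapose! hst
    ext <;> simp <;> nlinarith [mul_self_nonneg s, mul_self_nonneg t]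
  simpa [hk, hnorm] using h (s, t)

theorem linear_eq_zero_iff_exists_smul {s t : ℝ} (hs : s ≠ 0) (v : ℝ × ℝ) :
    s * v.1 + t * v.2 = 0 ↔ ∃ c : ℝ, v = c • ((-t / s, 1) : ℝ × ℝ) := by
  constructor
  · intro h
    refine ⟨v.2, Prod.ext ?_ (by simp)⟩
    simp only [Prod.smul_mk, smul_eq_mul]
    field_simp
    linarith
  · rintro ⟨c, rfl⟩
    simp only [Prod.smul_mk, smul_eq_mul]
    field_simp
    ring

noncomputable def scalarCurvatureSU (N : ℝ) : ℝ × ℝ → ℝ :=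
  rpowMonomial ((N ^ 2 - 3 * N + 2) / 4) (-1) 0 + rpowMonomial (N - 1) 0 (-1)
    - rpowMonomial ((N - 2) / 4) 1 (-2) - rpowMonomial (1 / 4) (1 - (N - 1) ^ 2) (-(2 * N))

theorem scalarCurvatureSU_eq (N : ℝ) :
    (fun p : ℝ × ℝ => (N ^ 2 - 3 * N + 2) / (4 * p.1) + (N - 1) / p.2
        - (N - 2) * p.1 / (4 * p.2 ^ 2) - (1 / 4) * p.1 ^ (1 - (N - 1) ^ 2) * p.2 ^ (-(2 * N))) =
      scalarCurvatureSU N := by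
  ext p
  simp only [scalarCurvatureSU, Pi.add_apply, Pi.sub_apply, rpowMonomial, Real.rpow_neg_one,
    Real.rpow_zero, Real.rpow_one, Real.rpow_neg_ofNat, zpow_neg, zpow_ofNat]
  ring

theorem fderiv_fderiv_scalarCurvatureSU_apply (N : ℝ) (v w : ℝ × ℝ) :
    fderiv ℝ (fderiv ℝ (scalarCurvatureSU N)) (1, 1) v w =
      -(N ^ 2 - 1) / 4 * ((N - 2) * v.1 + 2 * v.2) * ((N - 2) * w.1 + 2 * w.2) := by
  have hgrad := eventually_ne_zero_coords_nhds_one_one.mono fun p hp =>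
    (((hasFDerivAt_rpowMonomial ((N ^ 2 - 3 * N + 2) / 4) (-1) 0 hp.1 hp.2).add
      (hasFDerivAt_rpowMonomial (N - 1) 0 (-1) hp.1 hp.2)).sub
      (hasFDerivAt_rpowMonomial ((N - 2) / 4) 1 (-2) hp.1 hp.2)).sub
      (hasFDerivAt_rpowMonomial (1 / 4) (1 - (N - 1) ^ 2) (-(2 * N)) hp.1 hp.2)
  have hhess : HasFDerivAt _ _ ((1, 1) : ℝ × ℝ) :=
    (((hasFDerivAt_rpowMonomialGrad ((N ^ 2 - 3 * N + 2) / 4) (-1) 0 one_ne_zero one_ne_zero).add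
      (hasFDerivAt_rpowMonomialGrad (N - 1) 0 (-1) one_ne_zero one_ne_zero)).sub
      (hasFDerivAt_rpowMonomialGrad ((N - 2) / 4) 1 (-2) one_ne_zero one_ne_zero)).sub
      (hasFDerivAt_rpowMonomialGrad (1 / 4) (1 - (N - 1) ^ 2) (-(2 * N)) one_ne_zero one_ne_zero)
  rw [scalarCurvatureSU, fderiv_fderiv_eq_of_eventually_hasFDerivAt hgrad hhess]
  simp only [add_apply, sub_apply, rpowMonomialHessian_one_one_apply]
  ring

/-- The kernel of the Hessian at `(1,1)` of the scalar curvature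
`F(x,y) = (n²−3n+2)/(4x) + (n−1)/y − (n−2)x/(4y²) − (1/4)x^{1−(n−1)²}y^{−2n}`
of unit-volume `SU(n−1)`-invariant metrics on `SU(n)` is one-dimensional, spanned by
`(−2/(n−2), 1)`. -/
theorem hessian_kernel_SUn (n : ℕ) (hn : 3 ≤ n) (F : ℝ × ℝ → ℝ)
    (hF : ∀ p : ℝ × ℝ, F p =
      ((n : ℝ) ^ 2 - 3 * (n : ℝ) + 2) / (4 * p.1) + ((n : ℝ) - 1) / p.2
        - ((n : ℝ) - 2) * p.1 / (4 * p.2 ^ 2)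
        - (1 / 4) * p.1 ^ (1 - ((n : ℝ) - 1) ^ 2) * p.2 ^ (-(2 * (n : ℝ)))) :
    ∀ v : ℝ × ℝ,
      (∀ w : ℝ × ℝ, fderiv ℝ (fderiv ℝ F) (1, 1) v w = 0) ↔
        ∃ c : ℝ, v = c • ((-2 / ((n : ℝ) - 2), 1) : ℝ × ℝ) := by
  intro v
  have hN : (3 : ℝ) ≤ n := by exact_mod_cast hn
  obtain rfl : F = scalarCurvatureSU n := (funext hF).trans (scalarCurvatureSU_eq n)
  simp only [fderiv_fderiv_scalarCurvatureSU_apply]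
  rw [forall_rankOne_eq_zero_iff (by nlinarith) (by simp),
    linear_eq_zero_iff_exists_smul (by linarith)]
end

section
/- Fix an integer n ≥ 3, let x(y) = −(2/(n−2))y + n/(n−2), and define f(y) = (n² − 3n + 2)/(4 x(y)) + (n−1)/y − (n−2)x(y)/(4y²) − (1/4) x(y)^{−n(n−2)} y^{−2n} for 0 < y < n/2. Then f'(1) = 0, f''(1) = 0, and f'''(1) = n²(n−1)/(n−2)², which is nonzero. -/
/-!
Write `x = α y + (1 - α)` with `α = -2/(n-2)`, the line of the curve through the Killing
metric `(x, y) = (1, 1)`. Then `f` is a linear combination of the four functions `x(y)^p y^q`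
with `(p, q) ∈ {(-1, 0), (0, -1), (1, -2), (-n(n-2), -2n)}`, and by the Leibniz rule the `k`-th
derivative of `x(y)^p y^q` at `y = 1` is `∑ᵢ (k choose i) αⁱ (p)ᵢ (q)ₖ₋ᵢ` with
falling factorials `(·)ᵢ`. What remains is an identity of rational functions of `n`.
-/

open Finset

section AffineComposition

variable {𝕜 F : Type*} [NontriviallyNormedField 𝕜] [NormedAddCommGroup F] [NormedSpace 𝕜 F]

theorem deriv_comp_mul_add (f : 𝕜 → F) (c d y : 𝕜) :
    deriv (fun y => f (c * y + d)) y = c • deriv f (c * y + d) := by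
  rw [deriv_comp_mul_left c (fun z => f (z + d)), deriv_comp_add_const]

theorem iteratedDeriv_comp_mul_add (f : 𝕜 → F) (c d : 𝕜) (k : ℕ) :
    iteratedDeriv k (fun y => f (c * y + d)) =
      fun y => c ^ k • iteratedDeriv k f (c * y + d) := by
  induction k with
  | zero => simp
  | succ k ih =>
    ext y
    rw [iteratedDeriv_succ, ih, deriv_fun_const_smul_field, deriv_comp_mul_add, smul_smul,
      pow_succ, iteratedDeriv_succ]

end AffineComposition

theorem iteratedDeriv_rpow_const (p y : ℝ) (k : ℕ) :
    iteratedDeriv k (fun y => y ^ p) y = (descPochhammer ℝ k).eval p * y ^ (p - k) := by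
  rw [iteratedDeriv_eq_iterate, Real.iter_deriv_rpow_const]

-- No hypothesis on `c * y + d`: `Real.iter_deriv_rpow_const` holds everywhere,
-- junk values included.
theorem iteratedDeriv_mul_add_rpow (c d p y : ℝ) (k : ℕ) :
    iteratedDeriv k (fun y => (c * y + d) ^ p) y =
      c ^ k * (descPochhammer ℝ k).eval p * (c * y + d) ^ (p - k) := by
  rw [iteratedDeriv_comp_mul_add (fun z => z ^ p) c d k]
  dsimp only
  rw [iteratedDeriv_rpow_const, smul_eq_mul, mul_assoc]

noncomputable def lineMonomial (α p q y : ℝ) : ℝ := (α * y + (1 - α)) ^ p * y ^ q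

section LineMonomial

variable (α p q : ℝ)

theorem contDiffAt_line_rpow_one (k : ℕ) :
    ContDiffAt ℝ k (fun y : ℝ => (α * y + (1 - α)) ^ p) 1 :=
  (by fun_prop : ContDiffAt ℝ k (fun y : ℝ => α * y + (1 - α)) 1).rpow_const_of_ne (by simp)

theorem contDiffAt_lineMonomial_one (k : ℕ) : ContDiffAt ℝ k (lineMonomial α p q) 1 :=
  (contDiffAt_line_rpow_one α p k).mul (Real.contDiffAt_rpow_const_of_ne one_ne_zero)

theorem iteratedDeriv_lineMonomial_one (k : ℕ) :
    iteratedDeriv k (lineMonomial α p q) 1 = ∑ i ∈ range (k + 1),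
      k.choose i * (α ^ i * (descPochhammer ℝ i).eval p) *
        (descPochhammer ℝ (k - i)).eval q := by
  rw [show lineMonomial α p q = fun y => _ * _ from rfl, iteratedDeriv_fun_mul
    (contDiffAt_line_rpow_one α p k) (Real.contDiffAt_rpow_const_of_ne one_ne_zero)]
  refine sum_congr rfl fun i _ => ?_
  simp only [iteratedDeriv_mul_add_rpow, iteratedDeriv_rpow_const, mul_one, add_sub_cancel,
    Real.one_rpow]

theorem deriv_lineMonomial_one : deriv (lineMonomial α p q) 1 = p * α + q := by
  rw [← iteratedDeriv_one, iteratedDeriv_lineMonomial_one]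
  simp only [sum_range_succ, range_one, sum_singleton, Nat.choose_succ_self_right, zero_add,
    Nat.cast_one, pow_zero, descPochhammer_zero, Polynomial.eval_one, mul_one, tsub_zero,
    descPochhammer_one, Polynomial.eval_X, one_mul, Nat.choose_self, pow_one, tsub_self]
  ring

theorem iteratedDeriv_two_lineMonomial_one :
    iteratedDeriv 2 (lineMonomial α p q) 1 =
      p * (p - 1) * α ^ 2 + 2 * p * q * α + q * (q - 1) := by
  rw [iteratedDeriv_lineMonomial_one]
  simp only [sum_range_succ, range_one, sum_singleton, Nat.choose_zero_right, Nat.cast_one,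
    pow_zero, descPochhammer_zero, Polynomial.eval_one, mul_one, tsub_zero,
    descPochhammer_succ_right, CharP.cast_eq_zero, sub_zero, one_mul, Polynomial.eval_mul,
    Polynomial.eval_X, Polynomial.eval_sub, Nat.choose_succ_self_right, pow_one,
    Nat.add_one_sub_one, Nat.choose_self, tsub_self]
  ring

theorem iteratedDeriv_three_lineMonomial_one :
    iteratedDeriv 3 (lineMonomial α p q) 1 = p * (p - 1) * (p - 2) * α ^ 3
      + 3 * p * (p - 1) * q * α ^ 2 + 3 * p * q * (q - 1) * α + q * (q - 1) * (q - 2) := by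
  rw [iteratedDeriv_lineMonomial_one]
  simp only [sum_range_succ, range_one, sum_singleton, Nat.choose, Nat.cast_one, pow_zero,
    descPochhammer_zero, Polynomial.eval_one, mul_one, tsub_zero, descPochhammer_succ_right,
    CharP.cast_eq_zero, sub_zero, one_mul, Nat.cast_ofNat, Polynomial.eval_mul, Polynomial.eval_X,
    Polynomial.eval_sub, Polynomial.eval_ofNat, add_zero, pow_one, Nat.add_one_sub_one,
    Nat.reduceSub, tsub_self]
  ring

end LineMonomial

noncomputable def scalCurve (a y : ℝ) : ℝ :=
  (a ^ 2 - 3 * a + 2) / 4 * lineMonomial (-(2 / (a - 2))) (-1) 0 y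
    + (a - 1) * lineMonomial (-(2 / (a - 2))) 0 (-1) y
    - (a - 2) / 4 * lineMonomial (-(2 / (a - 2))) 1 (-2) y
    - 1 / 4 * lineMonomial (-(2 / (a - 2))) (-(a * (a - 2))) (-(2 * a)) y

section ScalCurve

variable (a : ℝ)

theorem iteratedDeriv_scalCurve_one (k : ℕ) :
    iteratedDeriv k (scalCurve a) 1 =
      (a ^ 2 - 3 * a + 2) / 4 * iteratedDeriv k (lineMonomial (-(2 / (a - 2))) (-1) 0) 1
        + (a - 1) * iteratedDeriv k (lineMonomial (-(2 / (a - 2))) 0 (-1)) 1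
        - (a - 2) / 4 * iteratedDeriv k (lineMonomial (-(2 / (a - 2))) 1 (-2)) 1
        - 1 / 4 * iteratedDeriv k
          (lineMonomial (-(2 / (a - 2))) (-(a * (a - 2))) (-(2 * a))) 1 := by
  have hM (c p q : ℝ) : ContDiffAt ℝ k (fun y => c * lineMonomial (-(2 / (a - 2))) p q y) 1 :=
    contDiffAt_const.mul (contDiffAt_lineMonomial_one _ p q k)
  unfold scalCurve
  rw [iteratedDeriv_fun_sub (((hM _ _ _).add (hM _ _ _)).sub (hM _ _ _)) (hM _ _ _),
    iteratedDeriv_fun_sub ((hM _ _ _).add (hM _ _ _)) (hM _ _ _),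
    iteratedDeriv_fun_add (hM _ _ _) (hM _ _ _)]
  simp only [iteratedDeriv_const_mul_field]

theorem deriv_scalCurve_one : deriv (scalCurve a) 1 = 0 := by
  rw [← iteratedDeriv_one, iteratedDeriv_scalCurve_one]
  simp only [iteratedDeriv_one, deriv_lineMonomial_one]
  field_simp
  ring

theorem iteratedDeriv_two_scalCurve_one (ha : a - 2 ≠ 0) :
    iteratedDeriv 2 (scalCurve a) 1 = 0 := by
  rw [iteratedDeriv_scalCurve_one]
  simp only [iteratedDeriv_two_lineMonomial_one]
  field_simp
  ring

theorem iteratedDeriv_three_scalCurve_one (ha : a - 2 ≠ 0) :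
    iteratedDeriv 3 (scalCurve a) 1 = a ^ 2 * (a - 1) / (a - 2) ^ 2 := by
  rw [iteratedDeriv_scalCurve_one]
  simp only [iteratedDeriv_three_lineMonomial_one]
  field_simp
  ring

end ScalCurve

/-- Along the curve of unit-volume `SU(n−1)`-invariant metrics on `SU(n)` given by
`x(y) = −(2/(n−2))y + n/(n−2)`, the scalar curvature
`f(y) = (n²−3n+2)/(4x(y)) + (n−1)/y − (n−2)x(y)/(4y²) − (1/4)x(y)^{−n(n−2)}y^{−2n}`
satisfies `f'(1) = 0`, `f''(1) = 0` and `f'''(1) = n²(n−1)/(n−2)² ≠ 0`. -/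
theorem scal_SUn_curve_inflection (n : ℕ) (hn : 3 ≤ n) (x f : ℝ → ℝ)
    (hx : ∀ y : ℝ, x y = -(2 / ((n : ℝ) - 2)) * y + (n : ℝ) / ((n : ℝ) - 2))
    (hf : ∀ y : ℝ, f y =
      ((n : ℝ) ^ 2 - 3 * (n : ℝ) + 2) / (4 * x y) + ((n : ℝ) - 1) / y
        - ((n : ℝ) - 2) * x y / (4 * y ^ 2)
        - (1 / 4) * (x y) ^ (-((n : ℝ) * ((n : ℝ) - 2))) * y ^ (-(2 * (n : ℝ)))) :
    deriv f 1 = 0 ∧ iteratedDeriv 2 f 1 = 0 ∧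
      iteratedDeriv 3 f 1 = (n : ℝ) ^ 2 * ((n : ℝ) - 1) / ((n : ℝ) - 2) ^ 2 ∧
      (n : ℝ) ^ 2 * ((n : ℝ) - 1) / ((n : ℝ) - 2) ^ 2 ≠ 0 := by
  have h3 : (3 : ℝ) ≤ n := by exact_mod_cast hn
  have h2 : (n : ℝ) - 2 ≠ 0 := by linarith
  have hf_eq : f = scalCurve n := by
    funext y
    have hxy : x y = -(2 / ((n : ℝ) - 2)) * y + (1 - -(2 / ((n : ℝ) - 2))) := by
      rw [hx]; field_simp; ring
    have hy2 : y ^ (-2 : ℝ) = (y ^ 2)⁻¹ := by exact_mod_cast Real.rpow_intCast y (-2)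
    simp only [hf, scalCurve, lineMonomial, ← hxy, Real.rpow_neg_one, Real.rpow_zero,
      Real.rpow_one, hy2]
    ring
  have h1 : (0 : ℝ) < n - 1 := by linarith
  subst hf_eq
  exact ⟨deriv_scalCurve_one _, iteratedDeriv_two_scalCurve_one _ h2,
    iteratedDeriv_three_scalCurve_one _ h2, by positivity⟩
end

section
/- Fix an integer n ≥ 3, let x(y) = −(2/(n−2))y + n/(n−2), and define f(y) = (n² − 3n + 2)/(4 x(y)) + (n−1)/y − (n−2)x(y)/(4y²) − (1/4) x(y)^{−n(n−2)} y^{−2n} for 0 < y < n/2. Then f does not have a local maximum at y = 1 and does not have a local minimum at y = 1. -/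
/-!
Along the curve, `f'(y) = (y - 1) G(y)` for an explicit `G` with `G(1) = 0` and
`G'(1) = n²(n - 1)/(2(n - 2)²) > 0`; the factor `y - 1` appears because `x(y) - y` is a
multiple of `1 - y`, which makes the logarithmic derivative of the volume term
`x^{-n(n-2)} y^{-2n}` equal to `2n²(y - 1)/((n - 2) x y)`. Hence `f' = (y - 1)² · (positive)`
on a punctured neighbourhood of `1`, so `f` is strictly increasing near `1`: the Killing metric
is an inflection point of the scalar curvature along the curve, neither a local maximum nor a
local minimum.
-/

open Filter Topology Set

section StrictMonoOn

variable {α β : Type*} [LinearOrder α] [TopologicalSpace α] [OrderTopology α]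
  [DenselyOrdered α] [Preorder β] {f : α → β} {s : Set α} {a : α}

lemma StrictMonoOn.not_isLocalMax [NoMaxOrder α] (hf : StrictMonoOn f s) (hs : s ∈ 𝓝 a) :
    ¬IsLocalMax f a := fun hmax => by
  obtain ⟨_, hy_le, hy_mem, hay⟩ := ((hmax.filter_mono nhdsWithin_le_nhds).and
    (Eventually.and (mem_nhdsWithin_of_mem_nhds hs) self_mem_nhdsWithin)).exists (f := 𝓝[>] a)
  exact (hf (mem_of_mem_nhds hs) hy_mem hay).not_ge hy_le

lemma StrictMonoOn.not_isLocalMin [NoMinOrder α] (hf : StrictMonoOn f s) (hs : s ∈ 𝓝 a) :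
    ¬IsLocalMin f a := fun hmin => by
  obtain ⟨_, hy_le, hy_mem, hya⟩ := ((hmin.filter_mono nhdsWithin_le_nhds).and
    (Eventually.and (mem_nhdsWithin_of_mem_nhds hs) self_mem_nhdsWithin)).exists (f := 𝓝[<] a)
  exact (hf hy_mem (mem_of_mem_nhds hs) hya).not_ge hy_le

end StrictMonoOn

lemma strictMonoOn_Icc_of_hasDerivAt_pos_of_ne {f f' : ℝ → ℝ} {a b c : ℝ} (hba : b ≤ a)
    (hac : a ≤ c) (hf : ∀ y ∈ Icc b c, HasDerivAt f (f' y) y)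
    (hf' : ∀ y ∈ Ioo b c, y ≠ a → 0 < f' y) : StrictMonoOn f (Icc b c) := by
  have piece : ∀ p q, b ≤ p → q ≤ c → a ∉ Ioo p q → StrictMonoOn f (Icc p q) := by
    intro p q hbp hqc ha
    have sub : ∀ y ∈ Icc p q, y ∈ Icc b c := fun y hy => ⟨hbp.trans hy.1, hy.2.trans hqc⟩
    refine strictMonoOn_of_hasDerivWithinAt_pos (f' := f') (convex_Icc p q)
      (fun y hy => (hf y (sub y hy)).continuousAt.continuousWithinAt) (fun y hy => ?_)
      (fun y hy => ?_) <;> rw [interior_Icc] at hy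
    · exact (hf y (sub y (Ioo_subset_Icc_self hy))).hasDerivWithinAt
    · exact hf' y ⟨hbp.trans_lt hy.1, hy.2.trans_le hqc⟩ (ne_of_mem_of_not_mem hy ha)
  rw [← Icc_union_Icc_eq_Icc hba hac]
  exact (piece b a le_rfl hac fun h => h.2.false).union (piece a c hba le_rfl fun h => h.1.false)
    (isGreatest_Icc hba) (isLeast_Icc hac)

lemma exists_mem_nhds_strictMonoOn_of_hasDerivAt {f f' : ℝ → ℝ} {a : ℝ}
    (hf : ∀ᶠ y in 𝓝 a, HasDerivAt f (f' y) y) (hf' : ∀ᶠ y in 𝓝[≠] a, 0 < f' y) :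
    ∃ s ∈ 𝓝 a, StrictMonoOn f s := by
  obtain ⟨ε, hε, hball⟩ :=
    Metric.eventually_nhds_iff.mp (hf.and (eventually_nhdsWithin_iff.mp hf'))
  have hdist : ∀ y ∈ Icc (a - ε / 2) (a + ε / 2), dist y a < ε := fun y hy => by
    rw [Real.dist_eq, abs_sub_lt_iff]; constructor <;> linarith [hy.1, hy.2]
  refine ⟨Icc (a - ε / 2) (a + ε / 2), Icc_mem_nhds (by linarith) (by linarith),
    strictMonoOn_Icc_of_hasDerivAt_pos_of_ne (by linarith) (by linarith)
      (fun y hy => (hball (hdist y hy)).1)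
      fun y hy hya => (hball (hdist y (Ioo_subset_Icc_self hy))).2 hya⟩

lemma HasDerivAt.eventually_pos_sub_mul {g : ℝ → ℝ} {c a : ℝ} (hg : HasDerivAt g c a)
    (hga : g a = 0) (hc : 0 < c) : ∀ᶠ y in 𝓝[≠] a, 0 < (y - a) * g y := by
  filter_upwards [(hasDerivAt_iff_tendsto_slope.mp hg).eventually (eventually_gt_nhds hc),
    self_mem_nhdsWithin] with y hslope hya
  have hya' : y - a ≠ 0 := sub_ne_zero.2 hya
  have h : (y - a) * g y = (y - a) ^ 2 * slope g a y := by
    rw [slope_def_field, hga, sub_zero]; field_simp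
  rw [h]; positivity

noncomputable section

namespace SUnCurve

variable {n y : ℝ}

def x (n y : ℝ) : ℝ := -(2 / (n - 2)) * y + n / (n - 2)

/-- `z / y²`, where `z = x^{-n(n-2)} y^{-2(n-1)}` is the third coordinate of the unit-volume
metric `g(y)`. -/
def q (n y : ℝ) : ℝ := x n y ^ (-(n * (n - 2))) * y ^ (-(2 * n))

def scal (n y : ℝ) : ℝ :=
  (n ^ 2 - 3 * n + 2) / (4 * x n y) + (n - 1) / y - (n - 2) * x n y / (4 * y ^ 2) - q n y / 4

def scalDerivFactor (n y : ℝ) : ℝ :=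
  n ^ 2 * ((n - 5) * y ^ 2 + (n + 3) * y - n) / (2 * (n - 2) ^ 2 * x n y ^ 2 * y ^ 3)
    - n ^ 2 * q n y / (2 * (n - 2) * x n y * y)

lemma x_eq (hn : n ≠ 2) : x n y = (n - 2 * y) / (n - 2) := by
  have : n - 2 ≠ 0 := sub_ne_zero.2 hn
  rw [x]; field_simp; ring

lemma x_one (hn : n ≠ 2) : x n 1 = 1 := by
  rw [x_eq hn, mul_one, div_self (sub_ne_zero.2 hn)]

lemma sub_two_mul_ne_zero (hn : n ≠ 2) (hx : x n y ≠ 0) : n - 2 * y ≠ 0 :=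
  fun h => hx (by rw [x_eq hn, h, zero_div])

lemma hasDerivAt_x (n y : ℝ) : HasDerivAt (x n) (-(2 / (n - 2))) y :=
  mul_one (-(2 / (n - 2))) ▸
    ((hasDerivAt_id' y).const_mul (-(2 / (n - 2)))).add_const (n / (n - 2))

lemma hasDerivAt_q (hn : n ≠ 2) (hy : y ≠ 0) (hx : x n y ≠ 0) :
    HasDerivAt (q n) (2 * n ^ 2 * (y - 1) / ((n - 2) * x n y * y) * q n y) y := by
  have h := ((hasDerivAt_x n y).rpow_const (p := -(n * (n - 2))) (Or.inl hx)).fun_mul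
    (Real.hasDerivAt_rpow_const (p := -(2 * n)) (Or.inl hy))
  refine h.congr_deriv ?_
  rw [Real.rpow_sub_one hx, Real.rpow_sub_one hy, q]
  have hn' : n - 2 ≠ 0 := sub_ne_zero.2 hn
  have hny := sub_two_mul_ne_zero hn hx
  rw [x_eq hn]
  field_simp
  ring

lemma hasDerivAt_scal (hn : n ≠ 2) (hy : y ≠ 0) (hx : x n y ≠ 0) :
    HasDerivAt (scal n) ((y - 1) * scalDerivFactor n y) y := by
  have h := ((((hasDerivAt_const y (n ^ 2 - 3 * n + 2)).fun_div ((hasDerivAt_x n y).const_mul 4)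
    (mul_ne_zero four_ne_zero hx)).add
      ((hasDerivAt_const y (n - 1)).fun_div (hasDerivAt_id' y) hy)).sub
    (((hasDerivAt_x n y).const_mul (n - 2)).fun_div ((hasDerivAt_pow 2 y).const_mul 4)
      (by positivity))).sub ((hasDerivAt_q hn hy hx).div_const 4)
  refine h.congr_deriv ?_
  have hn' : n - 2 ≠ 0 := sub_ne_zero.2 hn
  rw [scalDerivFactor]
  have hny := sub_two_mul_ne_zero hn hx
  rw [x_eq hn]
  field_simp
  ring

lemma scalDerivFactor_one (hn : n ≠ 2) : scalDerivFactor n 1 = 0 := by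
  have hn' : n - 2 ≠ 0 := sub_ne_zero.2 hn
  simp only [scalDerivFactor, q, x_one hn, Real.one_rpow]
  field_simp
  ring

lemma hasDerivAt_scalDerivFactor_one (hn : n ≠ 2) :
    HasDerivAt (scalDerivFactor n) (n ^ 2 * (n - 1) / (2 * (n - 2) ^ 2)) 1 := by
  have hn' : n - 2 ≠ 0 := sub_ne_zero.2 hn
  have hx1 : x n 1 ≠ 0 := by rw [x_one hn]; exact one_ne_zero
  have hP : HasDerivAt (fun z : ℝ => n ^ 2 * ((n - 5) * z ^ 2 + (n + 3) * z - n))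
      (n ^ 2 * ((n - 5) * (2 * 1) + (n + 3))) 1 := by
    simpa using ((((hasDerivAt_pow 2 (1:ℝ)).const_mul (n - 5)).add
      ((hasDerivAt_id (1:ℝ)).const_mul (n + 3))).sub_const n).const_mul (n ^ 2)
  have h := (hP.fun_div ((((hasDerivAt_x n 1).fun_pow 2).const_mul (2 * (n - 2) ^ 2)).fun_mul
      (hasDerivAt_pow 3 1)) (by rw [x_one hn]; simpa using hn')).sub
    (((hasDerivAt_q hn one_ne_zero hx1).const_mul (n ^ 2)).fun_div
      ((((hasDerivAt_x n 1).const_mul (2 * (n - 2))).fun_mul (hasDerivAt_id' 1)))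
      (by rw [x_one hn]; simpa using hn'))
  refine h.congr_deriv ?_
  simp only [q, x_one hn, Real.one_rpow]
  field_simp
  ring

end SUnCurve

end

/-- Along the curve of unit-volume `SU(n−1)`-invariant metrics on `SU(n)` given by
`x(y) = −(2/(n−2))y + n/(n−2)`, the scalar curvature
`f(y) = (n²−3n+2)/(4x(y)) + (n−1)/y − (n−2)x(y)/(4y²) − (1/4)x(y)^{−n(n−2)}y^{−2n}`
has neither a local maximum nor a local minimum at `y = 1`. -/
theorem scal_SUn_curve_not_localMax (n : ℕ) (hn : 3 ≤ n) (x f : ℝ → ℝ)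
    (hx : ∀ y : ℝ, x y = -(2 / ((n : ℝ) - 2)) * y + (n : ℝ) / ((n : ℝ) - 2))
    (hf : ∀ y : ℝ, f y =
      ((n : ℝ) ^ 2 - 3 * (n : ℝ) + 2) / (4 * x y) + ((n : ℝ) - 1) / y
        - ((n : ℝ) - 2) * x y / (4 * y ^ 2)
        - (1 / 4) * (x y) ^ (-((n : ℝ) * ((n : ℝ) - 2))) * y ^ (-(2 * (n : ℝ)))) :
    ¬ IsLocalMax f 1 ∧ ¬ IsLocalMin f 1 := by
  have hn3 : (3 : ℝ) ≤ n := by exact_mod_cast hn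
  have hn2 : (n : ℝ) ≠ 2 := by linarith
  have hf_eq : f = SUnCurve.scal n := by
    funext y
    rw [hf, funext hx]
    simp only [SUnCurve.scal, SUnCurve.x, SUnCurve.q]
    ring
  have hderiv : ∀ᶠ y in 𝓝 1, HasDerivAt f ((y - 1) * SUnCurve.scalDerivFactor n y) y := by
    have hx1 : SUnCurve.x n 1 ≠ 0 := by rw [SUnCurve.x_one hn2]; exact one_ne_zero
    filter_upwards [eventually_ne_nhds one_ne_zero,
      (SUnCurve.hasDerivAt_x n 1).continuousAt.eventually_ne hx1] with y hy hxy
    exact hf_eq ▸ SUnCurve.hasDerivAt_scal hn2 hy hxy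
  have hc : 0 < (n : ℝ) ^ 2 * (n - 1) / (2 * (n - 2) ^ 2) :=
    div_pos (mul_pos (by positivity) (by linarith)) (mul_pos two_pos (pow_pos (by linarith) 2))
  obtain ⟨s, hs, hmono⟩ := exists_mem_nhds_strictMonoOn_of_hasDerivAt hderiv
    ((SUnCurve.hasDerivAt_scalDerivFactor_one hn2).eventually_pos_sub_mul
      (SUnCurve.scalDerivFactor_one hn2) hc)
  exact ⟨hmono.not_isLocalMax hs, hmono.not_isLocalMin hs⟩
end

section
/- Fix an integer n ≥ 3 and set d₁ = (n−1)² − 1, d₂ = 2(n−1). Let S : ℝ³ → ℝ be defined on {x > 0, y > 0, z > 0} by S(x,y,z) = (1/2)(d₁/x + d₂/y + 1/z) − (1/4)( (n−1)(n−2)/x + (n−2)(x/y² + 2/x) + (2/z + z/y²) ), and let V = {(x,y,z) : x > 0, y > 0, z > 0, x^{d₁} y^{d₂} z = 1}. Then S does not have a local maximum on V at the point (1,1,1); that is, every neighborhood of (1,1,1) contains a point of V at which S exceeds S(1,1,1). -/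
/-!
Write `n = k + 2`. Along the curve `w ↦ (w⁻², wᵏ, w²ᵏ)` of unit-volume metrics, which keeps
`z / y²` constant, the scalar curvature becomes a Laurent polynomial in `w` whose derivative is
`k (k + 1) / 2 · (w^(k+2) - 1)² / w^(2k+3)`. This is positive for `w > 1`, so the scalar
curvature strictly increases as the curve leaves the Killing metric `w = 1`: that metric is a
degenerate critical point, not a local maximum.
-/

open Set Filter Topology

noncomputable section

def scalarCurvature (n : ℝ) (q : ℝ × ℝ × ℝ) : ℝ :=
  (1 / 2) * (((n - 1) ^ 2 - 1) / q.1 + 2 * (n - 1) / q.2.1 + 1 / q.2.2)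
    - (1 / 4) * ((n - 1) * (n - 2) / q.1
      + (n - 2) * (q.1 / q.2.1 ^ 2 + 2 / q.1)
      + (2 / q.2.2 + q.2.2 / q.2.1 ^ 2))

def unitVolumeCurve (k : ℕ) (w : ℝ) : ℝ × ℝ × ℝ := ((w ^ 2)⁻¹, w ^ k, w ^ (2 * k))

def scalarCurvatureAlongCurve (k : ℕ) (w : ℝ) : ℝ :=
  ((k + 1) * k * w ^ 2 + 4 * (k + 1) * (w ^ k)⁻¹ - k * (w ^ (2 * k + 2))⁻¹ - 1) / 4

end

theorem hasDerivAt_inv_pow (k : ℕ) {x : ℝ} (hx : x ≠ 0) :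
    HasDerivAt (fun y : ℝ => (y ^ k)⁻¹) (-k * (x ^ (k + 1))⁻¹) x := by
  have h := hasDerivAt_zpow (-(k : ℤ)) x (Or.inl hx)
  have hexp : -(k : ℤ) - 1 = -((k + 1 : ℕ) : ℤ) := by push_cast; ring
  simpa only [hexp, zpow_neg, zpow_natCast, Int.cast_neg, Int.cast_natCast] using h

theorem unitVolumeCurve_mem (k : ℕ) {w : ℝ} (hw : 0 < w) :
    unitVolumeCurve k w ∈ {q : ℝ × ℝ × ℝ | 0 < q.1 ∧ 0 < q.2.1 ∧ 0 < q.2.2 ∧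
      q.1 ^ (((k : ℝ) + 1) ^ 2 - 1) * q.2.1 ^ (2 * ((k : ℝ) + 1)) * q.2.2 = 1} := by
  refine ⟨by unfold unitVolumeCurve; positivity, pow_pos hw _, pow_pos hw _, ?_⟩
  have h₁ : ((k : ℝ) + 1) ^ 2 - 1 = ((k * (k + 2) : ℕ) : ℝ) := by push_cast; ring
  have h₂ : 2 * ((k : ℝ) + 1) = ((2 * (k + 1) : ℕ) : ℝ) := by push_cast; ring
  simp only [unitVolumeCurve, h₁, h₂, Real.rpow_natCast]
  rw [inv_pow, ← pow_mul, ← pow_mul, mul_assoc, ← pow_add,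
    show k * (2 * (k + 1)) + 2 * k = 2 * (k * (k + 2)) by ring, inv_mul_cancel₀ (by positivity)]

theorem tendsto_unitVolumeCurve (k : ℕ) :
    Tendsto (unitVolumeCurve k) (𝓝[>] 1) (𝓝 (1, 1, 1)) := by
  have h : ContinuousAt (unitVolumeCurve k) 1 := by
    unfold unitVolumeCurve
    fun_prop (disch := norm_num)
  simpa [unitVolumeCurve] using h.tendsto.mono_left nhdsWithin_le_nhds

theorem scalarCurvature_unitVolumeCurve (k : ℕ) {w : ℝ} (hw : w ≠ 0) :
    scalarCurvature ((k : ℝ) + 2) (unitVolumeCurve k w) = scalarCurvatureAlongCurve k w := by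
  simp only [scalarCurvature, unitVolumeCurve, scalarCurvatureAlongCurve]
  field_simp
  ring

theorem hasDerivAt_scalarCurvatureAlongCurve (k : ℕ) {w : ℝ} (hw : w ≠ 0) :
    HasDerivAt (scalarCurvatureAlongCurve k)
      (k * (k + 1) / 2 * (w ^ (k + 2) - 1) ^ 2 / w ^ (2 * k + 3)) w := by
  have h := ((((hasDerivAt_pow 2 w).const_mul (((k : ℝ) + 1) * k)).add
    ((hasDerivAt_inv_pow k hw).const_mul (4 * ((k : ℝ) + 1)))).sub
    ((hasDerivAt_inv_pow (2 * k + 2) hw).const_mul (k : ℝ))).sub_const 1 |>.div_const 4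
  refine h.congr_deriv ?_
  simp only [Nat.cast_ofNat, pow_one, Nat.add_one_sub_one]
  push_cast
  field_simp
  ring

theorem strictMonoOn_scalarCurvatureAlongCurve {k : ℕ} (hk : 0 < k) :
    StrictMonoOn (scalarCurvatureAlongCurve k) (Ici 1) := by
  have hderiv (w : ℝ) (hw : w ∈ Ici 1) :=
    hasDerivAt_scalarCurvatureAlongCurve k (w := w) (by simp at hw; positivity)
  refine strictMonoOn_of_hasDerivWithinAt_pos (convex_Ici 1)
    (f' := fun w => k * (k + 1) / 2 * (w ^ (k + 2) - 1) ^ 2 / w ^ (2 * k + 3))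
    (fun w hw => (hderiv w hw).continuousAt.continuousWithinAt)
    (fun w hw => (hderiv w (interior_subset hw)).hasDerivWithinAt) (fun w hw => ?_)
  rw [interior_Ici, mem_Ioi] at hw
  have hpow : 1 < w ^ (k + 2) := one_lt_pow₀ hw (by omega)
  have hk' : (0 : ℝ) < k := by exact_mod_cast hk
  have hw' : 0 < w := by linarith
  positivity

/-- The bi-invariant metric on `SU(n)`, `n ≥ 3`, is not a local maximum of scalar
curvature among unit-volume `SU(n−1)`-invariant metrics: the scalar curvature `S(x,y,z)`
restricted to the unit-volume variety `V = {x^{d₁} y^{d₂} z = 1}` does not have a local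
maximum at `(1,1,1)`. -/
theorem scal_SUn_not_localMaxOn (n : ℕ) (hn : 3 ≤ n) (d₁ d₂ : ℝ)
    (hd₁ : d₁ = ((n : ℝ) - 1) ^ 2 - 1) (hd₂ : d₂ = 2 * ((n : ℝ) - 1))
    (S : ℝ × ℝ × ℝ → ℝ)
    (hS : ∀ p : ℝ × ℝ × ℝ, S p =
      (1 / 2) * (d₁ / p.1 + d₂ / p.2.1 + 1 / p.2.2)
        - (1 / 4) * (((n : ℝ) - 1) * ((n : ℝ) - 2) / p.1
          + ((n : ℝ) - 2) * (p.1 / p.2.1 ^ 2 + 2 / p.1)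
          + (2 / p.2.2 + p.2.2 / p.2.1 ^ 2)))
    (V : Set (ℝ × ℝ × ℝ))
    (hV : V = {p : ℝ × ℝ × ℝ | 0 < p.1 ∧ 0 < p.2.1 ∧ 0 < p.2.2 ∧
      p.1 ^ d₁ * p.2.1 ^ d₂ * p.2.2 = 1}) :
    ∀ U ∈ nhds ((1, 1, 1) : ℝ × ℝ × ℝ), ∃ p ∈ U, p ∈ V ∧ S (1, 1, 1) < S p := by
  obtain ⟨k, rfl⟩ : ∃ k, n = k + 2 := ⟨n - 2, by omega⟩
  have hcast : ((k + 2 : ℕ) : ℝ) = k + 2 := by push_cast; ring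
  have hS' : S = scalarCurvature ((k : ℝ) + 2) :=
    funext fun q => by rw [hS, hd₁, hd₂, hcast]; rfl
  have hV' : V = {q : ℝ × ℝ × ℝ | 0 < q.1 ∧ 0 < q.2.1 ∧ 0 < q.2.2 ∧
      q.1 ^ (((k : ℝ) + 1) ^ 2 - 1) * q.2.1 ^ (2 * ((k : ℝ) + 1)) * q.2.2 = 1} := by
    rw [hV, hd₁, hd₂, hcast]
    ring_nf
  have hcurve : ∀ᶠ w in 𝓝[>] (1 : ℝ),
      unitVolumeCurve k w ∈ V ∧ S (1, 1, 1) < S (unitVolumeCurve k w) := by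
    filter_upwards [self_mem_nhdsWithin] with w (hw : 1 < w)
    rw [hV', hS']
    refine ⟨unitVolumeCurve_mem k (by linarith), ?_⟩
    have hstart : ((1, 1, 1) : ℝ × ℝ × ℝ) = unitVolumeCurve k 1 := by simp [unitVolumeCurve]
    rw [hstart, scalarCurvature_unitVolumeCurve k one_ne_zero,
      scalarCurvature_unitVolumeCurve k (by positivity)]
    exact strictMonoOn_scalarCurvatureAlongCurve (by omega) self_mem_Ici hw.le hw
  have hfreq : ∃ᶠ q in 𝓝 ((1, 1, 1) : ℝ × ℝ × ℝ), q ∈ V ∧ S (1, 1, 1) < S q :=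
    (tendsto_unitVolumeCurve k).frequently hcurve.frequently
  exact fun U hU => frequently_iff.mp hfreq hU
end

section
/- Fix an integer n ≥ 3, set a = (16n/((2n−1)·16ⁿ))^{1/(n+1−2n²)} and y(x) = −((n−2)/4)x + (n/4)a, and define p(x) = 4(n−1)(n−2)/x + 8(n−1)/y(x) − (n−2)x/y(x)² on the interval where x > 0 and y(x) > 0. Then p'(a) = 0, p''(a) = 2(n−2)n²/a³, and p'''(a) = −6(n−2)n²/a⁴. -/
/-!
With `y(x) = c x + d` affine, each of the three terms `A / x`, `B / y` and `C x / y²` of `p` is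
differentiated in closed form away from the poles `x = 0` and `y = 0`; near `a` we are on the open
set where both are nonzero, so the iterated derivatives of `p` agree with these closed forms there.
At `x = a` one has `y(a) = a / 2`, and the values collapse to the stated ones.
-/

open Set Filter Topology

theorem Set.EqOn.iteratedDeriv_succ {f g g' : ℝ → ℝ} {U : Set ℝ} {k : ℕ} (hU : IsOpen U)
    (hfg : EqOn (iteratedDeriv k f) g U) (hg : ∀ x ∈ U, HasDerivAt g (g' x) x) :
    EqOn (iteratedDeriv (k + 1) f) g' U := by
  intro x hx
  have hev : iteratedDeriv k f =ᶠ[𝓝 x] g := Filter.eventuallyEq_of_mem (hU.mem_nhds hx) hfg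
  rw [_root_.iteratedDeriv_succ, hev.deriv_eq, (hg x hx).deriv]

namespace AffineRational

variable (A B C c d : ℝ)

noncomputable def p (x : ℝ) : ℝ := A / x + B / (c * x + d) - C * x / (c * x + d) ^ 2

noncomputable def p₁ (x : ℝ) : ℝ :=
  -A / x ^ 2 - B * c / (c * x + d) ^ 2 - C * (d - c * x) / (c * x + d) ^ 3

noncomputable def p₂ (x : ℝ) : ℝ :=
  2 * A / x ^ 3 + 2 * B * c ^ 2 / (c * x + d) ^ 3 + 2 * C * c * (2 * d - c * x) / (c * x + d) ^ 4

noncomputable def p₃ (x : ℝ) : ℝ :=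
  -6 * A / x ^ 4 - 6 * B * c ^ 3 / (c * x + d) ^ 4
    - 6 * C * c ^ 2 * (3 * d - c * x) / (c * x + d) ^ 5

def regularSet : Set ℝ := {x | x ≠ 0 ∧ c * x + d ≠ 0}

variable {c d}

theorem isOpen_regularSet : IsOpen (regularSet c d) :=
  (isOpen_ne_fun continuous_id continuous_const).inter
    (isOpen_ne_fun (by fun_prop) continuous_const)

theorem hasDerivAt_affine (x : ℝ) : HasDerivAt (fun x => c * x + d) c x := by
  simpa using ((hasDerivAt_id' x).const_mul c).add_const d

variable {x : ℝ}

theorem hasDerivAt_p (hx : x ∈ regularSet c d) :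
    HasDerivAt (p A B C c d) (p₁ A B C c d x) x := by
  obtain ⟨hx0, hy0⟩ := hx
  have h := (((hasDerivAt_const x A).fun_div (hasDerivAt_id' x) hx0).add
      ((hasDerivAt_const x B).fun_div (hasDerivAt_affine x) hy0)).sub
      (((hasDerivAt_id' x).const_mul C).fun_div ((hasDerivAt_affine x).fun_pow 2)
        (pow_ne_zero 2 hy0))
  refine h.congr_deriv ?_
  simp only [p₁, Nat.cast_ofNat, Nat.reduceSub]
  field_simp
  ring

theorem hasDerivAt_p₁ (hx : x ∈ regularSet c d) :
    HasDerivAt (p₁ A B C c d) (p₂ A B C c d x) x := by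
  obtain ⟨hx0, hy0⟩ := hx
  have hnum : HasDerivAt (fun x => C * (d - c * x)) (C * (0 - c * 1)) x :=
    ((hasDerivAt_const x d).sub ((hasDerivAt_id' x).const_mul c)).const_mul C
  have h := (((hasDerivAt_const x (-A)).fun_div ((hasDerivAt_id' x).fun_pow 2)
        (pow_ne_zero 2 hx0)).sub
      ((hasDerivAt_const x (B * c)).fun_div ((hasDerivAt_affine x).fun_pow 2)
        (pow_ne_zero 2 hy0))).sub
      (hnum.fun_div ((hasDerivAt_affine x).fun_pow 3) (pow_ne_zero 3 hy0))
  refine h.congr_deriv ?_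
  simp only [p₂, Nat.cast_ofNat, Nat.reduceSub]
  field_simp
  ring

theorem hasDerivAt_p₂ (hx : x ∈ regularSet c d) :
    HasDerivAt (p₂ A B C c d) (p₃ A B C c d x) x := by
  obtain ⟨hx0, hy0⟩ := hx
  have hnum : HasDerivAt (fun x => 2 * C * c * (2 * d - c * x)) (2 * C * c * (0 - c * 1)) x :=
    ((hasDerivAt_const x (2 * d)).sub ((hasDerivAt_id' x).const_mul c)).const_mul (2 * C * c)
  have h := (((hasDerivAt_const x (2 * A)).fun_div ((hasDerivAt_id' x).fun_pow 3)
        (pow_ne_zero 3 hx0)).add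
      ((hasDerivAt_const x (2 * B * c ^ 2)).fun_div ((hasDerivAt_affine x).fun_pow 3)
        (pow_ne_zero 3 hy0))).add
      (hnum.fun_div ((hasDerivAt_affine x).fun_pow 4) (pow_ne_zero 4 hy0))
  refine h.congr_deriv ?_
  simp only [p₃, Nat.cast_ofNat, Nat.reduceSub]
  field_simp
  ring

theorem eqOn_iteratedDeriv_p :
    EqOn (iteratedDeriv 1 (p A B C c d)) (p₁ A B C c d) (regularSet c d) ∧
      EqOn (iteratedDeriv 2 (p A B C c d)) (p₂ A B C c d) (regularSet c d) ∧
      EqOn (iteratedDeriv 3 (p A B C c d)) (p₃ A B C c d) (regularSet c d) := by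
  have h₀ : EqOn (iteratedDeriv 0 (p A B C c d)) (p A B C c d) (regularSet c d) := by
    simp only [iteratedDeriv_zero, eqOn_refl]
  have h₁ := h₀.iteratedDeriv_succ isOpen_regularSet fun _ => hasDerivAt_p A B C
  have h₂ := h₁.iteratedDeriv_succ isOpen_regularSet fun _ => hasDerivAt_p₁ A B C
  exact ⟨h₁, h₂, h₂.iteratedDeriv_succ isOpen_regularSet fun _ => hasDerivAt_p₂ A B C⟩

end AffineRational

/-- For the curve of unit-volume `SU(2n−1)`-invariant metrics on `SU(2n)/Sp(n)`:
with `a = (16n/((2n−1)16ⁿ))^{1/(n+1−2n²)}`, `y(x) = −((n−2)/4)x + (n/4)a` and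
`p(x) = 4(n−1)(n−2)/x + 8(n−1)/y(x) − (n−2)x/y(x)²`, one has `p'(a) = 0`,
`p''(a) = 2(n−2)n²/a³` and `p'''(a) = −6(n−2)n²/a⁴`. -/
theorem scal_SU2n_Spn_p_derivatives (n : ℕ) (hn : 3 ≤ n) (a : ℝ)
    (ha : a = (16 * (n : ℝ) / ((2 * (n : ℝ) - 1) * 16 ^ n))
      ^ (1 / ((n : ℝ) + 1 - 2 * (n : ℝ) ^ 2)))
    (y p : ℝ → ℝ)
    (hy : ∀ x : ℝ, y x = -(((n : ℝ) - 2) / 4) * x + ((n : ℝ) / 4) * a)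
    (hp : ∀ x : ℝ, p x = 4 * ((n : ℝ) - 1) * ((n : ℝ) - 2) / x
      + 8 * ((n : ℝ) - 1) / y x - ((n : ℝ) - 2) * x / (y x) ^ 2) :
    deriv p a = 0 ∧
      iteratedDeriv 2 p a = 2 * ((n : ℝ) - 2) * (n : ℝ) ^ 2 / a ^ 3 ∧
      iteratedDeriv 3 p a = -(6 * ((n : ℝ) - 2) * (n : ℝ) ^ 2 / a ^ 4) := by
  have ha0 : 0 < a := by
    have hn1 : (1 : ℝ) ≤ n := by exact_mod_cast (by omega : 1 ≤ n)
    rw [ha]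
    exact Real.rpow_pos_of_pos
      (div_pos (by positivity) (mul_pos (by linarith) (by positivity))) _
  have hya : -(((n : ℝ) - 2) / 4) * a + ((n : ℝ) / 4) * a = a / 2 := by ring
  have hpA : p = AffineRational.p (4 * ((n : ℝ) - 1) * ((n : ℝ) - 2)) (8 * ((n : ℝ) - 1))
      ((n : ℝ) - 2) (-(((n : ℝ) - 2) / 4)) (((n : ℝ) / 4) * a) := by
    funext x
    rw [hp, hy, AffineRational.p]
  have haU : a ∈ AffineRational.regularSet (-(((n : ℝ) - 2) / 4)) (((n : ℝ) / 4) * a) :=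
    ⟨ha0.ne', by rw [hya]; positivity⟩
  obtain ⟨h₁, h₂, h₃⟩ :=
    AffineRational.eqOn_iteratedDeriv_p (4 * ((n : ℝ) - 1) * ((n : ℝ) - 2)) (8 * ((n : ℝ) - 1))
      ((n : ℝ) - 2)
  rw [← iteratedDeriv_one, hpA, h₁ haU, h₂ haU, h₃ haU]
  simp only [AffineRational.p₁, AffineRational.p₂, AffineRational.p₃, hya]
  refine ⟨?_, ?_, ?_⟩ <;> field_simp <;> ring
end

section
/- Fix an integer n ≥ 3, set a = (16n/((2n−1)·16ⁿ))^{1/(n+1−2n²)} and y(x) = −((n−2)/4)x + (n/4)a, and define scal(x) = (2n−1)( 4(n−1)(n−2)/x + 8(n−1)/y(x) − (n−2)x/y(x)² − x^{−(2n−1)(n−2)} y(x)^{−(4n−2)} ) on the interval where x > 0 and y(x) > 0. Then scal'(a) = 0, scal''(a) = 0, and scal'''(a) ≠ 0. -/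
/-!
On the open set where `0 < x` and `0 < y x`, `scal = (2n - 1) (p - R)` with `p` rational and
`R = x ^ α * y ^ β`, `α = -(2n - 1)(n - 2)`, `β = -(4n - 2)`. The derivatives of `R` are
computed through its logarithmic derivative `L = α / x + β y' / y`: `R' = R L`,
`R'' = R (L² + L')`, `R''' = R (L³ + 3 L L' + L'')`. At `x = a` we have `y a = a / 2`, hence
`L a = 0`, and the unit-volume normalisation of `a` gives `(2n - 1) R a = 4n / a`. Substituting,
`scal' a` and `scal'' a` vanish identically in `n`, while
`scal''' a = -2 (2n - 1) n² (n - 1) (n - 2) / a⁴`, which is nonzero for `n ≥ 3`.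
-/

open Set Filter Nat

noncomputable section

theorem iteratedDeriv_eqOn_of_hasDerivAt {𝕜 E : Type*} [NontriviallyNormedField 𝕜]
    [NormedAddCommGroup E] [NormedSpace 𝕜 E] {f : 𝕜 → E} {F : ℕ → 𝕜 → E} {S : Set 𝕜} {N : ℕ}
    (hS : IsOpen S) (hf : EqOn f (F 0) S)
    (hF : ∀ k < N, ∀ x ∈ S, HasDerivAt (F k) (F (k + 1) x) x) :
    ∀ k ≤ N, EqOn (iteratedDeriv k f) (F k) S
  | 0, _ => by simpa using hf
  | k + 1, hk => fun x hx => by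
    have hEq := iteratedDeriv_eqOn_of_hasDerivAt hS hf hF k (by omega)
    rw [iteratedDeriv_succ]
    exact ((hF k hk x hx).congr_of_eventuallyEq (eventuallyEq_of_mem (hS.mem_nhds hx) hEq)).deriv

/-- The `k`-th derivative of `α / x + β * m / y x`, the logarithmic derivative of
`x ^ α * y x ^ β` when `y` has slope `m`. -/
def powProdLogDeriv (α β m : ℝ) (y : ℝ → ℝ) (k : ℕ) (x : ℝ) : ℝ :=
  (-1) ^ k * k ! * (α / x ^ (k + 1) + β * m ^ (k + 1) / y x ^ (k + 1))

def ratPartDeriv (A B C m : ℝ) (y : ℝ → ℝ) : ℕ → ℝ → ℝ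
  | 0, x => A / x + B / y x - C * x / y x ^ 2
  | 1, x => -A / x ^ 2 - (B * m + C) / y x ^ 2 + 2 * C * m * x / y x ^ 3
  | 2, x => 2 * A / x ^ 3 + 2 * m * (B * m + 2 * C) / y x ^ 3 - 6 * C * m ^ 2 * x / y x ^ 4
  | 3, x => -6 * A / x ^ 4 - 6 * m ^ 2 * (B * m + 3 * C) / y x ^ 4
      + 24 * C * m ^ 3 * x / y x ^ 5
  | _, _ => 0

def powProdDeriv (α β m : ℝ) (y : ℝ → ℝ) : ℕ → ℝ → ℝ
  | 0, x => x ^ α * y x ^ β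
  | 1, x => x ^ α * y x ^ β * powProdLogDeriv α β m y 0 x
  | 2, x => x ^ α * y x ^ β * (powProdLogDeriv α β m y 0 x ^ 2 + powProdLogDeriv α β m y 1 x)
  | 3, x => x ^ α * y x ^ β * (powProdLogDeriv α β m y 0 x ^ 3
      + 3 * powProdLogDeriv α β m y 0 x * powProdLogDeriv α β m y 1 x
      + powProdLogDeriv α β m y 2 x)
  | _, _ => 0

section

variable {y : ℝ → ℝ} {m x : ℝ}

theorem HasDerivAt.const_div_pow (hy : HasDerivAt y m x) (c : ℝ) (k : ℕ) (hyx : y x ≠ 0) :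
    HasDerivAt (fun t => c / y t ^ k) (-(k * m * c / y x ^ (k + 1))) x := by
  refine ((hasDerivAt_const x c).fun_div (hy.fun_pow k) (pow_ne_zero k hyx)).congr_deriv ?_
  rcases k with _ | k
  · simp
  · field_simp
    push_cast
    ring

theorem HasDerivAt.mul_div_pow (hy : HasDerivAt y m x) (c : ℝ) (k : ℕ) (hyx : y x ≠ 0) :
    HasDerivAt (fun t => c * t / y t ^ k) (c / y x ^ k - k * m * c * x / y x ^ (k + 1)) x := by
  refine (((hasDerivAt_id' x).const_mul c).fun_div (hy.fun_pow k)
    (pow_ne_zero k hyx)).congr_deriv ?_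
  rcases k with _ | k
  · simp
  · field_simp
    push_cast
    ring

theorem HasDerivAt.rpow_mul_rpow (hy : HasDerivAt y m x) (α β : ℝ) (hx : 0 < x) (hyx : 0 < y x) :
    HasDerivAt (fun t => t ^ α * y t ^ β) (x ^ α * y x ^ β * (α / x + β * m / y x)) x := by
  refine ((Real.hasDerivAt_rpow_const (p := α) (Or.inl hx.ne')).mul
    (hy.rpow_const (p := β) (Or.inl hyx.ne'))).congr_deriv ?_
  rw [Real.rpow_sub_one hx.ne', Real.rpow_sub_one hyx.ne']
  field_simp

theorem hasDerivAt_powProdLogDeriv (hy : HasDerivAt y m x) (α β : ℝ) (k : ℕ) (hx : x ≠ 0)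
    (hyx : y x ≠ 0) :
    HasDerivAt (powProdLogDeriv α β m y k) (powProdLogDeriv α β m y (k + 1) x) x := by
  refine ((((hasDerivAt_id' x).const_div_pow α (k + 1) hx).add
    (hy.const_div_pow (β * m ^ (k + 1)) (k + 1) hyx)).const_mul
      ((-1) ^ k * k ! : ℝ)).congr_deriv ?_
  simp only [powProdLogDeriv, factorial_succ]
  push_cast
  ring

theorem hasDerivAt_ratPartDeriv (hy : HasDerivAt y m x) (A B C : ℝ) {k : ℕ} (hk : k < 3)
    (hx : x ≠ 0) (hyx : y x ≠ 0) :
    HasDerivAt (ratPartDeriv A B C m y k) (ratPartDeriv A B C m y (k + 1) x) x := by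
  have hid := hasDerivAt_id' x
  interval_cases k
  · have h := ((hid.const_div_pow A 1 hx).fun_add (hy.const_div_pow B 1 hyx)).fun_sub
      (hy.mul_div_pow C 2 hyx)
    simp only [pow_one] at h
    refine h.congr_deriv ?_
    simp only [ratPartDeriv, Nat.reduceAdd]; push_cast; ring
  · refine (((hid.const_div_pow (-A) 2 hx).fun_sub (hy.const_div_pow (B * m + C) 2 hyx)).fun_add
      (hy.mul_div_pow (2 * C * m) 3 hyx)).congr_deriv ?_
    simp only [ratPartDeriv, Nat.reduceAdd]; push_cast; ring
  · refine (((hid.const_div_pow (2 * A) 3 hx).fun_add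
      (hy.const_div_pow (2 * m * (B * m + 2 * C)) 3 hyx)).fun_sub
      (hy.mul_div_pow (6 * C * m ^ 2) 4 hyx)).congr_deriv ?_
    simp only [ratPartDeriv, Nat.reduceAdd]; push_cast; ring

theorem hasDerivAt_powProdDeriv (hy : HasDerivAt y m x) (α β : ℝ) {k : ℕ} (hk : k < 3)
    (hx : 0 < x) (hyx : 0 < y x) :
    HasDerivAt (powProdDeriv α β m y k) (powProdDeriv α β m y (k + 1) x) x := by
  have hR := hy.rpow_mul_rpow α β hx hyx
  have hL := fun j => hasDerivAt_powProdLogDeriv hy α β j hx.ne' hyx.ne'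
  have hL0 : powProdLogDeriv α β m y 0 x = α / x + β * m / y x := by
    simp [powProdLogDeriv]
  interval_cases k
  · exact hR.congr_deriv (by simp only [powProdDeriv, hL0])
  · refine (hR.fun_mul (hL 0)).congr_deriv ?_
    simp only [powProdDeriv, hL0]
    ring
  · refine (hR.fun_mul (((hL 0).fun_pow 2).fun_add (hL 1))).congr_deriv ?_
    simp only [powProdDeriv, hL0]
    ring

end

def scalDeriv (ν : ℝ) (y : ℝ → ℝ) (k : ℕ) (x : ℝ) : ℝ :=
  (2 * ν - 1) *
    (ratPartDeriv (4 * (ν - 1) * (ν - 2)) (8 * (ν - 1)) (ν - 2) (-((ν - 2) / 4)) y k x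
      - powProdDeriv (-((2 * ν - 1) * (ν - 2))) (-(4 * ν - 2)) (-((ν - 2) / 4)) y k x)

section

variable {ν a : ℝ} {y : ℝ → ℝ}

theorem hasDerivAt_scalDeriv {x : ℝ} (hy : HasDerivAt y (-((ν - 2) / 4)) x) {k : ℕ} (hk : k < 3)
    (hx : 0 < x) (hyx : 0 < y x) :
    HasDerivAt (scalDeriv ν y k) (scalDeriv ν y (k + 1) x) x :=
  .const_mul _ ((hasDerivAt_ratPartDeriv hy _ _ _ hk hx.ne' hyx.ne').fun_sub
    (hasDerivAt_powProdDeriv hy _ _ hk hx hyx))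

theorem powProdLogDeriv_zero_eq_zero (ha : a ≠ 0) (hya : y a = a / 2) :
    powProdLogDeriv (-((2 * ν - 1) * (ν - 2))) (-(4 * ν - 2)) (-((ν - 2) / 4)) y 0 a = 0 := by
  simp only [powProdLogDeriv, hya]
  field_simp
  ring

theorem scalDeriv_one_eq_zero (ha : a ≠ 0) (hya : y a = a / 2) : scalDeriv ν y 1 a = 0 := by
  simp only [scalDeriv, ratPartDeriv, powProdDeriv, powProdLogDeriv_zero_eq_zero ha hya, hya]
  field_simp
  ring

theorem scalDeriv_two_eq_zero (ha : a ≠ 0) (hya : y a = a / 2)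
    (hR : (2 * ν - 1) * (a ^ (-((2 * ν - 1) * (ν - 2))) * (a / 2) ^ (-(4 * ν - 2))) = 4 * ν / a) :
    scalDeriv ν y 2 a = 0 := by
  simp only [scalDeriv, ratPartDeriv, powProdDeriv, powProdLogDeriv_zero_eq_zero ha hya, hya]
  simp only [powProdLogDeriv, hya]
  generalize a ^ (-((2 * ν - 1) * (ν - 2))) * (a / 2) ^ (-(4 * ν - 2)) = R at hR ⊢
  -- The coefficient is `-L' a`, with `L = powProdLogDeriv … 0`; in the next lemma it is `-L'' a`.
  linear_combination (norm := skip) (-((2 * ν - 1) * ν * (ν - 2) / (2 * a ^ 2))) * hR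
  field_simp
  ring

theorem scalDeriv_three_eq (ha : a ≠ 0) (hya : y a = a / 2)
    (hR : (2 * ν - 1) * (a ^ (-((2 * ν - 1) * (ν - 2))) * (a / 2) ^ (-(4 * ν - 2))) = 4 * ν / a) :
    scalDeriv ν y 3 a = -(2 * (2 * ν - 1) * ν ^ 2 * (ν - 1) * (ν - 2)) / a ^ 4 := by
  simp only [scalDeriv, ratPartDeriv, powProdDeriv, powProdLogDeriv_zero_eq_zero ha hya, hya]
  simp only [powProdLogDeriv, hya]
  generalize a ^ (-((2 * ν - 1) * (ν - 2))) * (a / 2) ^ (-(4 * ν - 2)) = R at hR ⊢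
  linear_combination (norm := skip) (-((2 * ν - 1) * ν * (ν - 2) * (ν - 4) / (2 * a ^ 3))) * hR
  field_simp
  ring

end

theorem rpow_mul_half_rpow_eq_of_unit_volume (n : ℕ) {a : ℝ} (ha : 0 < a)
    (hvol : a ^ ((n : ℝ) + 1 - 2 * (n : ℝ) ^ 2) = 16 * n / ((2 * n - 1) * 16 ^ n)) :
    (2 * (n : ℝ) - 1) * (a ^ (-((2 * (n : ℝ) - 1) * ((n : ℝ) - 2))) * (a / 2) ^ (-(4 * (n : ℝ) - 2)))
      = 4 * n / a := by
  have h2n : (2 * (n : ℝ) - 1) ≠ 0 := by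
    intro h
    have h' : (2 * n : ℝ) = 1 := by linarith
    norm_cast at h'
    omega
  have htwo : (2 : ℝ) ^ (-(4 * (n : ℝ) - 2)) = 4 / 16 ^ n := by
    rw [show -(4 * (n : ℝ) - 2) = 2 - 4 * n by ring, Real.rpow_sub two_pos,
      Real.rpow_mul two_pos.le, Real.rpow_natCast]
    norm_num
  rw [Real.div_rpow ha.le two_pos.le, htwo, mul_div_assoc', ← Real.rpow_add ha,
    show -((2 * (n : ℝ) - 1) * ((n : ℝ) - 2)) + -(4 * n - 2) = (n + 1 - 2 * n ^ 2) - 1 by ring,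
    Real.rpow_sub_one ha.ne', hvol]
  field_simp
  norm_num

end

/-- Along the curve of unit-volume `SU(2n−1)`-invariant metrics on `SU(2n)/Sp(n)` with
`a = (16n/((2n−1)16ⁿ))^{1/(n+1−2n²)}` and `y(x) = −((n−2)/4)x + (n/4)a`, the scalar
curvature `scal(x) = (2n−1)(4(n−1)(n−2)/x + 8(n−1)/y(x) − (n−2)x/y(x)² − x^{−(2n−1)(n−2)}y(x)^{−(4n−2)})`
satisfies `scal'(a) = 0`, `scal''(a) = 0` and `scal'''(a) ≠ 0`. -/
theorem scal_SU2n_Spn_inflection (n : ℕ) (hn : 3 ≤ n) (a : ℝ)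
    (ha : a = (16 * (n : ℝ) / ((2 * (n : ℝ) - 1) * 16 ^ n))
      ^ (1 / ((n : ℝ) + 1 - 2 * (n : ℝ) ^ 2)))
    (y scal : ℝ → ℝ)
    (hy : ∀ x : ℝ, y x = -(((n : ℝ) - 2) / 4) * x + ((n : ℝ) / 4) * a)
    (hscal : ∀ x : ℝ, scal x = (2 * (n : ℝ) - 1) *
      (4 * ((n : ℝ) - 1) * ((n : ℝ) - 2) / x + 8 * ((n : ℝ) - 1) / y x
        - ((n : ℝ) - 2) * x / (y x) ^ 2
        - x ^ (-((2 * (n : ℝ) - 1) * ((n : ℝ) - 2))) * (y x) ^ (-(4 * (n : ℝ) - 2)))) :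
    deriv scal a = 0 ∧ iteratedDeriv 2 scal a = 0 ∧ iteratedDeriv 3 scal a ≠ 0 := by
  have hn' : (3 : ℝ) ≤ n := by exact_mod_cast hn
  have hbase : 0 < 16 * (n : ℝ) / ((2 * n - 1) * 16 ^ n) :=
    div_pos (by positivity) (mul_pos (by linarith) (by positivity))
  have ha_pos : 0 < a := ha ▸ Real.rpow_pos_of_pos hbase _
  have hvol : a ^ ((n : ℝ) + 1 - 2 * (n : ℝ) ^ 2) = 16 * n / ((2 * n - 1) * 16 ^ n) := by
    rw [ha, one_div, Real.rpow_inv_rpow hbase.le (by nlinarith)]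
  have hslope (x : ℝ) : HasDerivAt y (-(((n : ℝ) - 2) / 4)) x := by
    rw [funext hy]
    simpa using ((hasDerivAt_id' x).const_mul (-(((n : ℝ) - 2) / 4))).add_const ((n / 4) * a)
  have hya : y a = a / 2 := by rw [hy]; ring
  have hS : IsOpen {x | 0 < x ∧ 0 < y x} :=
    (isOpen_lt continuous_const continuous_id).inter (isOpen_lt continuous_const
      (continuous_iff_continuousAt.2 fun x => (hslope x).continuousAt))
  have haS : a ∈ {x | 0 < x ∧ 0 < y x} := ⟨ha_pos, by rw [hya]; positivity⟩
  have hderiv := iteratedDeriv_eqOn_of_hasDerivAt (F := scalDeriv n y) (N := 3) hS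
    (fun x _ => hscal x)
    (fun k hk x hx => hasDerivAt_scalDeriv (hslope x) hk hx.1 hx.2)
  have hR := rpow_mul_half_rpow_eq_of_unit_volume n ha_pos hvol
  refine ⟨?_, ?_, ?_⟩
  · rw [← iteratedDeriv_one, hderiv 1 (by norm_num) haS, scalDeriv_one_eq_zero ha_pos.ne' hya]
  · rw [hderiv 2 (by norm_num) haS, scalDeriv_two_eq_zero ha_pos.ne' hya hR]
  · rw [hderiv 3 le_rfl haS, scalDeriv_three_eq ha_pos.ne' hya hR]
    have : 0 < 2 * (2 * (n : ℝ) - 1) * n ^ 2 * (n - 1) * (n - 2) :=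
      mul_pos (mul_pos (mul_pos (mul_pos two_pos (by linarith)) (by positivity)) (by linarith))
        (by linarith)
    exact div_ne_zero (neg_ne_zero.2 this.ne') (by positivity)
end

section
/- Fix an integer n ≥ 3, set a = (16n/((2n−1)·16ⁿ))^{1/(n+1−2n²)} and y(x) = −((n−2)/4)x + (n/4)a, and define scal(x) = (2n−1)( 4(n−1)(n−2)/x + 8(n−1)/y(x) − (n−2)x/y(x)² − x^{−(2n−1)(n−2)} y(x)^{−(4n−2)} ) on the interval where x > 0 and y(x) > 0. Then scal does not have a local maximum at x = a and does not have a local minimum at x = a. -/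
/-!
Along the curve, `scal' x = (2n-1)(n-2) (x - a) H(x)` with an explicit `H`
(`SU2nSpn.derivFactor`). The normalisation of `a` is exactly the condition `H a = 0` (the
symmetric metric is Einstein, hence critical), and a direct computation gives
`H' a = -n²(n-1)/a⁴ < 0`. So `(x - a) H(x) < 0` on a punctured neighbourhood of `a`: `scal` is
strictly decreasing through `a`, which is an inflection point rather than an extremum.
-/

open Filter Topology Set

theorem not_isLocalMax_and_not_isLocalMin_of_hasDerivAt_neg {f f' : ℝ → ℝ} {a : ℝ}
    (hf : ∀ᶠ x in 𝓝 a, HasDerivAt f (f' x) x) (hf' : ∀ᶠ x in 𝓝[≠] a, f' x < 0) :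
    ¬IsLocalMax f a ∧ ¬IsLocalMin f a := by
  obtain ⟨ε, hε, hball⟩ :=
    (nhds_basis_Ioo_pos a).eventually_iff.mp (hf.and (eventually_nhdsWithin_iff.mp hf'))
  have anti : ∀ b c, a - ε < b → c < a + ε → a ∉ Ioo b c → StrictAntiOn f (Icc b c) := by
    intro b c hb hc hac
    refine strictAntiOn_of_deriv_neg (convex_Icc b c) (fun x hx => ?_) (fun x hx => ?_)
    · exact (hball (x := x) ⟨by linarith [hx.1], by linarith [hx.2]⟩).1.continuousAt
        |>.continuousWithinAt
    · rw [interior_Icc] at hx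
      obtain ⟨hderiv, hneg⟩ := hball (x := x) ⟨by linarith [hx.1], by linarith [hx.2]⟩
      rw [hderiv.deriv]
      exact hneg fun h => hac (h ▸ hx)
  have hl := anti (a - ε / 2) a (by linarith) (by linarith) fun h => h.2.false
  have hr := anti a (a + ε / 2) (by linarith) (by linarith) fun h => h.1.false
  constructor
  · intro hmax
    obtain ⟨x, hxa, hx⟩ := ((IsMaxFilter.filter_mono hmax nhdsWithin_le_nhds).and
      (Ioo_mem_nhdsLT (by linarith : a - ε / 2 < a))).exists
    exact (hl ⟨hx.1.le, hx.2.le⟩ ⟨by linarith, le_rfl⟩ hx.2).not_ge hxa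
  · intro hmin
    obtain ⟨x, hxa, hx⟩ := ((IsMinFilter.filter_mono hmin nhdsWithin_le_nhds).and
      (Ioo_mem_nhdsGT (by linarith : a < a + ε / 2))).exists
    exact (hr ⟨le_rfl, by linarith⟩ ⟨hx.1.le, hx.2.le⟩ hx.1).not_ge hxa

theorem eventually_sub_mul_neg_of_hasDerivAt {H : ℝ → ℝ} {a d : ℝ} (hH : HasDerivAt H d a)
    (h0 : H a = 0) (hd : d < 0) : ∀ᶠ x in 𝓝[≠] a, (x - a) * H x < 0 := by
  filter_upwards [(hasDerivAt_iff_tendsto_slope.mp hH).eventually_lt_const hd,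
    self_mem_nhdsWithin] with x hslope hx
  have hxa : x - a ≠ 0 := sub_ne_zero.mpr hx
  have : (x - a) * H x = (x - a) ^ 2 * slope H a x := by
    rw [slope_def_field, h0, sub_zero]
    field_simp
  rw [this]
  exact mul_neg_of_pos_of_neg (by positivity) hslope

namespace SU2nSpn

variable (m a : ℝ)

noncomputable def y (x : ℝ) : ℝ := -((m - 2) / 4) * x + m / 4 * a

noncomputable def scal (x : ℝ) : ℝ :=
  (2 * m - 1) * (4 * (m - 1) * (m - 2) / x + 8 * (m - 1) / y m a x
    - (m - 2) * x / (y m a x) ^ 2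
    - x ^ (-((2 * m - 1) * (m - 2))) * (y m a x) ^ (-(4 * m - 2)))

/-- The volume term `x ^ p * y ^ q` of `scal` contributes `-(2m-1)(m-2)(x-a) powerTerm x`
to `scal'`. -/
noncomputable def powerTerm (x : ℝ) : ℝ :=
  (2 * m - 1) * (m / 4) * (x ^ (-((2 * m - 1) * (m - 2)) - 1) * y m a x ^ (-(4 * m - 2) - 1))

noncomputable def derivFactor (x : ℝ) : ℝ :=
  m ^ 2 / 16 * ((m - 2) * (m - 5) * x ^ 2 - 2 * a * (m - 1) * (m - 3) * x + a ^ 2 * m * (m - 1))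
    / (x ^ 2 * y m a x ^ 3) - powerTerm m a x

theorem y_self : y m a a = a / 2 := by
  unfold y; ring

theorem hasDerivAt_y (x : ℝ) : HasDerivAt (y m a) (-((m - 2) / 4)) x :=
  ((hasDerivAt_id x).const_mul _).add_const _ |>.congr_deriv (mul_one _)

theorem hasDerivAt_scal {x : ℝ} (hx : x ≠ 0) (hy : y m a x ≠ 0) :
    HasDerivAt (scal m a) ((2 * m - 1) * (m - 2) * ((x - a) * derivFactor m a x)) x := by
  have hy' := hasDerivAt_y m a x
  have hscal := ((((hasDerivAt_const x (4 * (m - 1) * (m - 2))).div (hasDerivAt_id x) hx).add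
    ((hasDerivAt_const x (8 * (m - 1))).div hy' hy)).sub
    (((hasDerivAt_id x).const_mul (m - 2)).div (hy'.pow 2) (pow_ne_zero 2 hy))).sub
    ((Real.hasDerivAt_rpow_const (p := -((2 * m - 1) * (m - 2))) (Or.inl hx)).mul
      (hy'.rpow_const (p := -(4 * m - 2)) (Or.inl hy))) |>.const_mul (2 * m - 1)
  refine hscal.congr_deriv ?_
  have hxp : x ^ (-((2 * m - 1) * (m - 2))) = x ^ (-((2 * m - 1) * (m - 2)) - 1) * x := by
    rw [← Real.rpow_add_one hx, sub_add_cancel]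
  have hyq : y m a x ^ (-(4 * m - 2)) = y m a x ^ (-(4 * m - 2) - 1) * y m a x := by
    rw [← Real.rpow_add_one hy, sub_add_cancel]
  unfold derivFactor powerTerm
  simp only [id, Pi.pow_apply, hxp, hyq, Nat.cast_ofNat, Nat.reduceSub, pow_one]
  generalize x ^ (-((2 * m - 1) * (m - 2)) - 1) = A
  generalize y m a x ^ (-(4 * m - 2) - 1) = B
  have hyx : y m a x = (m * a - (m - 2) * x) / 4 := by unfold y; ring
  have hy4 : m * a - x * (m - 2) ≠ 0 := by
    rw [hyx, mul_comm (m - 2)] at hy; simpa using hy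
  rw [hyx]
  field_simp
  ring

theorem hasDerivAt_powerTerm_self (ha : a ≠ 0) :
    HasDerivAt (powerTerm m a) (powerTerm m a a * ((m - 4) / (2 * a))) a := by
  have hya : y m a a ≠ 0 := by rw [y_self]; exact div_ne_zero ha two_ne_zero
  have hK := ((Real.hasDerivAt_rpow_const (p := -((2 * m - 1) * (m - 2)) - 1) (Or.inl ha)).mul
    ((hasDerivAt_y m a a).rpow_const (p := -(4 * m - 2) - 1) (Or.inl hya))).const_mul
    ((2 * m - 1) * (m / 4))
  refine hK.congr_deriv ?_
  unfold powerTerm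
  rw [Real.rpow_sub_one ha (-((2 * m - 1) * (m - 2)) - 1),
    Real.rpow_sub_one hya (-(4 * m - 2) - 1)]
  generalize a ^ (-((2 * m - 1) * (m - 2)) - 1) = A
  generalize y m a a ^ (-(4 * m - 2) - 1) = B
  rw [y_self]
  field_simp
  ring

theorem derivFactor_self (ha : a ≠ 0) (hK : powerTerm m a a = 2 * m ^ 2 / a ^ 3) :
    derivFactor m a a = 0 := by
  unfold derivFactor
  rw [hK, y_self]
  field_simp
  ring

theorem hasDerivAt_derivFactor_self (ha : a ≠ 0) (hK : powerTerm m a a = 2 * m ^ 2 / a ^ 3) :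
    HasDerivAt (derivFactor m a) (-(m ^ 2 * (m - 1) / a ^ 4)) a := by
  have hya : y m a a ≠ 0 := by rw [y_self]; exact div_ne_zero ha two_ne_zero
  have hnum := ((((hasDerivAt_pow 2 a).const_mul ((m - 2) * (m - 5))).sub
    ((hasDerivAt_id a).const_mul (2 * a * (m - 1) * (m - 3)))).add_const
    (a ^ 2 * m * (m - 1))).const_mul (m ^ 2 / 16)
  have hden := (hasDerivAt_pow 2 a).mul ((hasDerivAt_y m a a).pow 3)
  have hH := (hnum.div hden (mul_ne_zero (pow_ne_zero 2 ha) (pow_ne_zero 3 hya))).sub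
    (hasDerivAt_powerTerm_self m a ha)
  refine hH.congr_deriv ?_
  simp only [id, Pi.mul_apply, Pi.pow_apply, Pi.sub_apply, hK, y_self, Nat.cast_ofNat,
    Nat.reduceSub, pow_one]
  field_simp
  ring

noncomputable def unitVolumeRadius (n : ℕ) : ℝ :=
  (16 * (n : ℝ) / ((2 * (n : ℝ) - 1) * 16 ^ n)) ^ (1 / ((n : ℝ) + 1 - 2 * (n : ℝ) ^ 2))

theorem unitVolumeRadius_pos {n : ℕ} (hn : 1 ≤ n) : 0 < unitVolumeRadius n := by
  have hn' : (1 : ℝ) ≤ n := by exact_mod_cast hn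
  have : (0 : ℝ) < 2 * n - 1 := by linarith
  unfold unitVolumeRadius
  positivity

theorem powerTerm_unitVolumeRadius {n : ℕ} (hn : 2 ≤ n) :
    powerTerm n (unitVolumeRadius n) (unitVolumeRadius n)
      = 2 * (n : ℝ) ^ 2 / unitVolumeRadius n ^ 3 := by
  have hn' : (2 : ℝ) ≤ n := by exact_mod_cast hn
  have ha0 := unitVolumeRadius_pos (n := n) (by omega)
  set a := unitVolumeRadius n with ha
  have hbase : 0 < 16 * (n : ℝ) / ((2 * (n : ℝ) - 1) * 16 ^ n) := by
    have : (0 : ℝ) < 2 * n - 1 := by linarith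
    positivity
  have hvol : a ^ ((n : ℝ) + 1 - 2 * (n : ℝ) ^ 2)
      = 16 * (n : ℝ) / ((2 * (n : ℝ) - 1) * 16 ^ n) := by
    rw [ha, unitVolumeRadius, ← Real.rpow_mul hbase.le, one_div, inv_mul_cancel₀ (by nlinarith),
      Real.rpow_one]
  have hadd : a ^ (-((2 * (n : ℝ) - 1) * ((n : ℝ) - 2)) - 1) * a ^ (-(4 * (n : ℝ) - 2) - 1)
      = a ^ ((n : ℝ) + 1 - 2 * (n : ℝ) ^ 2) / a ^ 3 := by
    rw [← Real.rpow_add ha0, ← Real.rpow_natCast a 3, ← Real.rpow_sub ha0]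
    ring_nf
  have h16 : (2 : ℝ) ^ (4 * (n : ℝ) - 1) = 16 ^ n / 2 := by
    rw [Real.rpow_sub two_pos, Real.rpow_one, Real.rpow_mul_natCast zero_le_two]
    norm_num
  have hneg : (2 : ℝ) ^ (-(4 * (n : ℝ) - 2) - 1) = (2 ^ (4 * (n : ℝ) - 1))⁻¹ := by
    rw [← Real.rpow_neg zero_le_two]
    ring_nf
  have h2n : (2 * (n : ℝ) - 1) ≠ 0 := by linarith
  unfold powerTerm
  rw [y_self, Real.div_rpow ha0.le zero_le_two, hneg, h16, div_inv_eq_mul,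
    ← mul_assoc (a ^ (-((2 * (n : ℝ) - 1) * ((n : ℝ) - 2)) - 1)), hadd, hvol]
  field_simp
  ring

end SU2nSpn

/-- Along the curve of unit-volume `SU(2n−1)`-invariant metrics on `SU(2n)/Sp(n)` with
`a = (16n/((2n−1)16ⁿ))^{1/(n+1−2n²)}` and `y(x) = −((n−2)/4)x + (n/4)a`, the scalar
curvature `scal(x)` has neither a local maximum nor a local minimum at `x = a`. -/
theorem scal_SU2n_Spn_not_localMax (n : ℕ) (hn : 3 ≤ n) (a : ℝ)
    (ha : a = (16 * (n : ℝ) / ((2 * (n : ℝ) - 1) * 16 ^ n))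
      ^ (1 / ((n : ℝ) + 1 - 2 * (n : ℝ) ^ 2)))
    (y scal : ℝ → ℝ)
    (hy : ∀ x : ℝ, y x = -(((n : ℝ) - 2) / 4) * x + ((n : ℝ) / 4) * a)
    (hscal : ∀ x : ℝ, scal x = (2 * (n : ℝ) - 1) *
      (4 * ((n : ℝ) - 1) * ((n : ℝ) - 2) / x + 8 * ((n : ℝ) - 1) / y x
        - ((n : ℝ) - 2) * x / (y x) ^ 2
        - x ^ (-((2 * (n : ℝ) - 1) * ((n : ℝ) - 2))) * (y x) ^ (-(4 * (n : ℝ) - 2)))) :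
    ¬ IsLocalMax scal a ∧ ¬ IsLocalMin scal a := by
  open SU2nSpn in
  have hn' : (3 : ℝ) ≤ n := by exact_mod_cast hn
  have ha' : a = unitVolumeRadius n := ha
  have ha0 : 0 < a := ha' ▸ unitVolumeRadius_pos (by omega)
  have hK : powerTerm n a a = 2 * (n : ℝ) ^ 2 / a ^ 3 :=
    ha' ▸ powerTerm_unitVolumeRadius (by omega)
  obtain rfl : scal = SU2nSpn.scal n a := funext fun x => by rw [hscal, hy]; rfl
  have hya : 0 < SU2nSpn.y n a a := by rw [y_self]; positivity
  refine not_isLocalMax_and_not_isLocalMin_of_hasDerivAt_neg ?_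
    (f' := fun x => (2 * n - 1) * (n - 2) * ((x - a) * derivFactor n a x)) ?_
  · filter_upwards [eventually_gt_nhds ha0,
      continuousAt_const.eventually_lt (hasDerivAt_y n a a).continuousAt hya] with x hx hyx
    exact hasDerivAt_scal n a hx.ne' hyx.ne'
  · have hslope : -((n : ℝ) ^ 2 * (n - 1) / a ^ 4) < 0 :=
      neg_neg_of_pos (div_pos (by nlinarith) (by positivity))
    filter_upwards [eventually_sub_mul_neg_of_hasDerivAt
      (hasDerivAt_derivFactor_self n a ha0.ne' hK) (derivFactor_self n a ha0.ne' hK) hslope]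
      with x hx
    exact mul_neg_of_pos_of_neg (by nlinarith) hx
end

section
/- Fix an integer n ≥ 4 and define g(x) = ( 4(n−1) + (n²−3n+2) x^{n/(n−2)} + (2−n) x^{−n/(n−2)} ) / (2x) for x > 0. Then g'(1) = 0, g''(1) = 0, and g'''(1) = 2n²(n−1)/(n−2)², which is nonzero; consequently g does not have a local maximum at x = 1 and does not have a local minimum at x = 1. -/
/-!
Away from `0`, dividing by `2x` turns `g` into a combination `∑ cᵢ x^{rᵢ}` of three real powers with
exponents `-1`, `p - 1`, `-p - 1`, `p = n/(n-2)`, so `g⁽ᵏ⁾(1) = ∑ cᵢ rᵢ(rᵢ-1)⋯(rᵢ-k+1)`; this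
vanishes for `k = 1, 2` and equals `2n²(n-1)/(n-2)² ≠ 0` for `k = 3`. A function with
`f'(a) = f''(a) = 0 ≠ f'''(a)` has no local extremum at `a`: say `f'''(a) > 0`; then `f''` changes
sign from `-` to `+` at `a`, so `f'` decreases to `0` and increases again, i.e. `f' > 0` on a
punctured neighbourhood of `a`, and `f` is strictly increasing through `a`.
-/

open Real Filter Set Topology

section DerivativeTest

variable {f : ℝ → ℝ} {a : ℝ}

lemma eventually_lt_nhdsGT_of_deriv_pos (hc : ContinuousAt f a)
    (hf : ∀ᶠ x in 𝓝[>] a, 0 < deriv f x) : ∀ᶠ x in 𝓝[>] a, f a < f x := by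
  obtain ⟨b, hab, hb⟩ := (nhdsGT_basis a).eventually_iff.mp hf
  have hmono : StrictMonoOn f (Ico a b) := by
    refine strictMonoOn_of_deriv_pos (convex_Ico a b)
      (fun x (hx : x ∈ Ico a b) => ?_) fun x hx => ?_
    · rcases eq_or_lt_of_le hx.1 with rfl | hax
      · exact hc.continuousWithinAt
      · exact (differentiableAt_of_deriv_ne_zero (hb ⟨hax, hx.2⟩).ne').continuousAt
          |>.continuousWithinAt
    · exact hb (by rwa [interior_Ico] at hx)
  filter_upwards [Ioo_mem_nhdsGT hab] with x hx
  exact hmono (left_mem_Ico.2 hab) (Ioo_subset_Ico_self hx) hx.1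

lemma eventually_lt_nhdsLT_of_deriv_pos (hc : ContinuousAt f a)
    (hf : ∀ᶠ x in 𝓝[<] a, 0 < deriv f x) : ∀ᶠ x in 𝓝[<] a, f x < f a := by
  obtain ⟨b, hba, hb⟩ := (nhdsLT_basis a).eventually_iff.mp hf
  have hmono : StrictMonoOn f (Ioc b a) := by
    refine strictMonoOn_of_deriv_pos (convex_Ioc b a)
      (fun x (hx : x ∈ Ioc b a) => ?_) fun x hx => ?_
    · rcases eq_or_lt_of_le hx.2 with rfl | hxa
      · exact hc.continuousWithinAt
      · exact (differentiableAt_of_deriv_ne_zero (hb ⟨hx.1, hxa⟩).ne').continuousAt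
          |>.continuousWithinAt
    · exact hb (by rwa [interior_Ioc] at hx)
  filter_upwards [Ioo_mem_nhdsLT hba] with x hx
  exact hmono (Ioo_subset_Ioc_self hx) (right_mem_Ioc.2 hba) hx.2

lemma eventually_gt_nhdsLT_of_deriv_neg (hc : ContinuousAt f a)
    (hf : ∀ᶠ x in 𝓝[<] a, deriv f x < 0) : ∀ᶠ x in 𝓝[<] a, f a < f x := by
  have := eventually_lt_nhdsLT_of_deriv_pos (f := fun x => -f x) hc.neg
    (by simpa only [deriv.fun_neg, neg_pos] using hf)
  simpa only [neg_lt_neg_iff] using this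

theorem not_isLocalExtr_of_deriv_deriv_deriv_pos (hf : ContDiffAt ℝ 2 f a)
    (h1 : deriv f a = 0) (h2 : deriv (deriv f) a = 0) (h3 : 0 < deriv (deriv (deriv f)) a) :
    ¬IsLocalExtr f a := by
  have hsign :=
    nhdsWithin_le_nhds (s := {a}ᶜ) (eventually_nhdsWithin_sign_eq_of_deriv_pos h3 h2)
  have hc : ContinuousAt (deriv f) a := (hf.derivWithin (m := 1) (by norm_num)).continuousAt
  have hright : ∀ᶠ x in 𝓝[>] a, f a < f x := by
    refine eventually_lt_nhdsGT_of_deriv_pos hf.continuousAt ?_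
    simpa only [h1] using
      eventually_lt_nhdsGT_of_deriv_pos hc (deriv_pos_right_of_sign_deriv hsign)
  have hleft : ∀ᶠ x in 𝓝[<] a, f x < f a := by
    refine eventually_lt_nhdsLT_of_deriv_pos hf.continuousAt ?_
    simpa only [h1] using
      eventually_gt_nhdsLT_of_deriv_neg hc (deriv_neg_left_of_sign_deriv hsign)
  rintro (hmin | hmax)
  · obtain ⟨x, hx, hlt⟩ := ((hmin.filter_mono nhdsWithin_le_nhds).and hleft).exists
    exact hx.not_gt hlt
  · obtain ⟨x, hx, hlt⟩ := ((hmax.filter_mono nhdsWithin_le_nhds).and hright).exists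
    exact hx.not_gt hlt

theorem not_isLocalExtr_of_deriv_deriv_deriv_ne_zero (hf : ContDiffAt ℝ 2 f a)
    (h1 : deriv f a = 0) (h2 : deriv (deriv f) a = 0) (h3 : deriv (deriv (deriv f)) a ≠ 0) :
    ¬IsLocalExtr f a := by
  rcases h3.lt_or_gt with h3 | h3
  · have := not_isLocalExtr_of_deriv_deriv_deriv_pos (f := fun x => -f x) hf.neg
      (by simpa only [deriv.fun_neg, neg_eq_zero] using h1)
      (by simp only [deriv.fun_neg', deriv.fun_neg, h2, neg_zero])
      (by simpa only [deriv.fun_neg', deriv.fun_neg, Left.neg_pos_iff] using h3)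
    exact fun h => this h.neg
  · exact not_isLocalExtr_of_deriv_deriv_deriv_pos hf h1 h2 h3

end DerivativeTest

section RpowSum

variable {ι : Type*} (s : Finset ι) (c r : ι → ℝ) {x : ℝ}

lemma contDiffAt_sum_mul_rpow (hx : x ≠ 0) {k : WithTop ℕ∞} :
    ContDiffAt ℝ k (fun y => ∑ i ∈ s, c i * y ^ r i) x :=
  ContDiffAt.sum fun _ _ => contDiffAt_const.mul (contDiffAt_rpow_const_of_ne hx)

lemma iteratedDeriv_sum_mul_rpow (k : ℕ) (hx : x ≠ 0) :
    iteratedDeriv k (fun y => ∑ i ∈ s, c i * y ^ r i) x =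
      ∑ i ∈ s, c i * (descPochhammer ℝ k).eval (r i) * x ^ (r i - k) := by
  rw [iteratedDeriv_fun_sum fun i _ => contDiffAt_const.mul (contDiffAt_rpow_const_of_ne hx)]
  refine Finset.sum_congr rfl fun i _ => ?_
  rw [iteratedDeriv_const_mul_field, iteratedDeriv_eq_iterate, iter_deriv_rpow_const, mul_assoc]

end RpowSum

noncomputable def scalCoeff (n : ℝ) : Fin 3 → ℝ :=
  ![2 * (n - 1), (n ^ 2 - 3 * n + 2) / 2, (2 - n) / 2]

noncomputable def scalExponent (n : ℝ) : Fin 3 → ℝ :=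
  ![-1, n / (n - 2) - 1, -(n / (n - 2)) - 1]

lemma scal_eq_sum_rpow (n : ℝ) {x : ℝ} (hx : x ≠ 0) :
    (4 * (n - 1) + (n ^ 2 - 3 * n + 2) * x ^ (n / (n - 2)) + (2 - n) * x ^ (-(n / (n - 2))))
      / (2 * x) = ∑ i, scalCoeff n i * x ^ scalExponent n i := by
  simp only [Fin.sum_univ_three, scalCoeff, scalExponent, Matrix.cons_val_zero,
    Matrix.cons_val_one, Matrix.cons_val_two, Matrix.head_cons, Matrix.tail_cons,
    rpow_sub_one hx, rpow_neg_one]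
  field_simp
  ring

lemma sum_scalCoeff_descPochhammer {n : ℝ} (hn : n ≠ 2) :
    ∑ i, scalCoeff n i * (descPochhammer ℝ 1).eval (scalExponent n i) = 0 ∧
    ∑ i, scalCoeff n i * (descPochhammer ℝ 2).eval (scalExponent n i) = 0 ∧
    ∑ i, scalCoeff n i * (descPochhammer ℝ 3).eval (scalExponent n i) =
      2 * n ^ 2 * (n - 1) / (n - 2) ^ 2 := by
  have : n - 2 ≠ 0 := sub_ne_zero.2 hn
  simp only [Fin.sum_univ_three, scalCoeff, scalExponent, Matrix.cons_val_zero,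
    Matrix.cons_val_one, Matrix.cons_val_two, Matrix.head_cons, Matrix.tail_cons,
    descPochhammer_succ_eval, descPochhammer_zero, Polynomial.eval_one]
  refine ⟨?_, ?_, ?_⟩ <;> field_simp <;> ring

/-- The scalar curvature
`g(x) = (4(n−1) + (n²−3n+2)x^{n/(n−2)} + (2−n)x^{−n/(n−2)})/(2x)` along the curve of
unit-volume `SO(2n)`-invariant metrics on `SO(2n)/Tⁿ` satisfies `g'(1) = 0`, `g''(1) = 0`,
`g'''(1) = 2n²(n−1)/(n−2)² ≠ 0`; consequently `g` has neither a local maximum nor a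
local minimum at `x = 1`. -/
theorem scal_SO2n_inflection (n : ℕ) (hn : 4 ≤ n) (g : ℝ → ℝ)
    (hg : ∀ x : ℝ, g x = (4 * ((n : ℝ) - 1)
      + ((n : ℝ) ^ 2 - 3 * (n : ℝ) + 2) * x ^ ((n : ℝ) / ((n : ℝ) - 2))
      + (2 - (n : ℝ)) * x ^ (-((n : ℝ) / ((n : ℝ) - 2)))) / (2 * x)) :
    deriv g 1 = 0 ∧ iteratedDeriv 2 g 1 = 0 ∧
      iteratedDeriv 3 g 1 = 2 * (n : ℝ) ^ 2 * ((n : ℝ) - 1) / ((n : ℝ) - 2) ^ 2 ∧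
      2 * (n : ℝ) ^ 2 * ((n : ℝ) - 1) / ((n : ℝ) - 2) ^ 2 ≠ 0 ∧
      ¬ IsLocalMax g 1 ∧ ¬ IsLocalMin g 1 := by
  have hn4 : (4 : ℝ) ≤ n := by exact_mod_cast hn
  have hn2 : (n : ℝ) ≠ 2 := by linarith
  have hloc : g =ᶠ[𝓝 1] fun x => ∑ i, scalCoeff n i * x ^ scalExponent n i := by
    filter_upwards [isOpen_ne.mem_nhds one_ne_zero] with x hx
    rw [hg, scal_eq_sum_rpow _ hx]
  have hderiv (k : ℕ) : iteratedDeriv k g 1 =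
      ∑ i, scalCoeff n i * (descPochhammer ℝ k).eval (scalExponent n i) := by
    simp [hloc.iteratedDeriv_eq, iteratedDeriv_sum_mul_rpow _ _ _ k one_ne_zero]
  obtain ⟨hsum1, hsum2, hsum3⟩ := sum_scalCoeff_descPochhammer hn2
  have h1 : deriv g 1 = 0 := by rw [← iteratedDeriv_one, hderiv, hsum1]
  have h2 : iteratedDeriv 2 g 1 = 0 := by rw [hderiv, hsum2]
  have h3 : iteratedDeriv 3 g 1 = 2 * (n : ℝ) ^ 2 * ((n : ℝ) - 1) / ((n : ℝ) - 2) ^ 2 := by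
    rw [hderiv, hsum3]
  have hc : 2 * (n : ℝ) ^ 2 * ((n : ℝ) - 1) / ((n : ℝ) - 2) ^ 2 ≠ 0 :=
    (div_pos (by nlinarith) (pow_pos (by linarith) 2)).ne'
  have hsmooth : ContDiffAt ℝ 2 g 1 :=
    (contDiffAt_sum_mul_rpow _ _ _ one_ne_zero).congr_of_eventuallyEq hloc
  have hextr := not_isLocalExtr_of_deriv_deriv_deriv_ne_zero hsmooth h1
    (by rwa [iteratedDeriv_succ, iteratedDeriv_one] at h2)
    (by rwa [← h3, iteratedDeriv_succ, iteratedDeriv_succ, iteratedDeriv_one] at hc)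
  exact ⟨h1, h2, h3, hc, fun h => hextr (Or.inr h), fun h => hextr (Or.inl h)⟩
end
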